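/- arXiv:2601.02660 — 9 statements merged into one kernel-verified Lean document; each statement's English description precedes it below -/
import Mathlib

section
/- Let A : S_A ⊗ R_A, B : S_B ⊗ R_B, R : R_A ⊗ R_B be bipartite vectors represented in double-ket form by linear operators A : R_A → S_A, B : S_B → R_B, R : R_B → R_A. Then the partial trace over R_A ⊗ R_B of (|A⟩⟩⟨⟨A| ⊗ |B⟩⟩⟨⟨B|)(I_{S_A⊗S_B} ⊗ |R⟩⟩⟨⟨R|) equals |A R* B⟩⟩⟨⟨A R* B|, where R* denotes entrywise complex conjugation in the computational basis and A R* B : S_B → S_A. -/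
open Matrix

noncomputable section

variable {SA RA SB RB : Type} [Fintype SA] [Fintype RA] [Fintype SB] [Fintype RB]
  [DecidableEq SA] [DecidableEq RA] [DecidableEq SB] [DecidableEq RB]

/-- Alice's rank-1 operator `|A⟩⟩⟨⟨A|` on `S_A ⊗ R_A`, for `A : R_A → S_A`:
the coefficient of `|A⟩⟩` at `(s, r)` is `A s r`. -/
def opA (A : Matrix SA RA ℂ) : Matrix (SA × RA) (SA × RA) ℂ :=
  Matrix.of fun p q => A p.1 p.2 * star (A q.1 q.2)

/-- Bob's rank-1 operator `|B⟩⟩⟨⟨B|` on `S_B ⊗ R_B`, for `B : S_B → R_B`: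
the coefficient of `|B⟩⟩` at `(t, u)` is `B u t`. -/
def opB (B : Matrix RB SB ℂ) : Matrix (SB × RB) (SB × RB) ℂ :=
  Matrix.of fun p q => B p.2 p.1 * star (B q.2 q.1)

/-- The rank-1 resource operator `|R⟩⟩⟨⟨R|` on `R_A ⊗ R_B`, for `R : R_B → R_A`:
the coefficient of `|R⟩⟩` at `(r, u)` is `R r u`. -/
def opR (R : Matrix RA RB ℂ) : Matrix (RA × RB) (RA × RB) ℂ :=
  Matrix.of fun p q => R p.1 p.2 * star (R q.1 q.2)

/-- The rank-1 operator `|M⟩⟩⟨⟨M|` on `S_A ⊗ S_B`, for `M : S_B → S_A`. -/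
def opM (M : Matrix SA SB ℂ) : Matrix (SA × SB) (SA × SB) ℂ :=
  Matrix.of fun p q => M p.1 p.2 * star (M q.1 q.2)

/-- `|A⟩⟩⟨⟨A| ⊗ |B⟩⟩⟨⟨B|` as an operator on `(S_A ⊗ S_B) ⊗ (R_A ⊗ R_B)`
(indices regrouped by measured/resource systems). -/
def opAB (A : Matrix SA RA ℂ) (B : Matrix RB SB ℂ) :
    Matrix ((SA × SB) × (RA × RB)) ((SA × SB) × (RA × RB)) ℂ :=
  Matrix.of fun x y =>
    opA A (x.1.1, x.2.1) (y.1.1, y.2.1) * opB B (x.1.2, x.2.2) (y.1.2, y.2.2)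

/-- `I_{S_A ⊗ S_B} ⊗ |R⟩⟩⟨⟨R|` on `(S_A ⊗ S_B) ⊗ (R_A ⊗ R_B)`. -/
def idTensorOpR (R : Matrix RA RB ℂ) :
    Matrix ((SA × SB) × (RA × RB)) ((SA × SB) × (RA × RB)) ℂ :=
  Matrix.of fun x y => (if x.1 = y.1 then (1 : ℂ) else 0) * opR R x.2 y.2

/-- Partial trace over `R_A ⊗ R_B`. -/
def ptrace (T : Matrix ((SA × SB) × (RA × RB)) ((SA × SB) × (RA × RB)) ℂ) :
    Matrix (SA × SB) (SA × SB) ℂ :=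
  Matrix.of fun p q => ∑ r : RA × RB, T (p, r) (q, r)

lemma sum4_rev {M : Type*} [AddCommMonoid M] {α β γ δ : Type} [Fintype α] [Fintype β]
    [Fintype γ] [Fintype δ] (f : α → β → γ → δ → M) :
    (∑ a, ∑ b, ∑ c, ∑ d, f a b c d) = ∑ d, ∑ c, ∑ b, ∑ a, f a b c d := by
  calc (∑ a, ∑ b, ∑ c, ∑ d, f a b c d)
      = ∑ a, ∑ b, ∑ d, ∑ c, f a b c d :=
        Finset.sum_congr rfl fun a _ => Finset.sum_congr rfl fun b _ => Finset.sum_comm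
    _ = ∑ a, ∑ d, ∑ b, ∑ c, f a b c d :=
        Finset.sum_congr rfl fun a _ => Finset.sum_comm
    _ = ∑ d, ∑ a, ∑ b, ∑ c, f a b c d := Finset.sum_comm
    _ = ∑ d, ∑ a, ∑ c, ∑ b, f a b c d :=
        Finset.sum_congr rfl fun d _ => Finset.sum_congr rfl fun a _ => Finset.sum_comm
    _ = ∑ d, ∑ c, ∑ a, ∑ b, f a b c d :=
        Finset.sum_congr rfl fun d _ => Finset.sum_comm
    _ = ∑ d, ∑ c, ∑ b, ∑ a, f a b c d :=
        Finset.sum_congr rfl fun d _ => Finset.sum_congr rfl fun c _ => Finset.sum_comm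

/-- `Tr_{R_A,R_B}[(|A⟩⟩⟨⟨A| ⊗ |B⟩⟩⟨⟨B|)(I_{S_A⊗S_B} ⊗ |R⟩⟩⟨⟨R|)] = |A R* B⟩⟩⟨⟨A R* B|`,
where `R*` is the entrywise complex conjugate of `R`. -/
theorem ptrace_opAB_mul_idTensorOpR (A : Matrix SA RA ℂ) (B : Matrix RB SB ℂ)
    (R : Matrix RA RB ℂ) :
    ptrace (opAB A B * idTensorOpR R) = opM (A * R.map star * B) := by
  ext p q
  simp only [ptrace, opM, Matrix.of_apply, Matrix.mul_apply, opAB, opA, opB, idTensorOpR, opR,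
    Matrix.map_apply, Fintype.sum_prod_type, mul_ite, mul_zero, mul_one, ite_mul, zero_mul,
    Finset.sum_ite_eq, Finset.mem_univ, if_true]
  simp only [Prod.ext_iff, ite_and, Finset.sum_ite_irrel, Finset.sum_const_zero,
    Finset.sum_ite_eq', Finset.mem_univ, if_true]
  simp only [star_sum, star_mul', Finset.sum_mul, Finset.mul_sum]
  rw [show (∑ x : RB, ∑ x_1 : RA, ∑ x_2 : RB, ∑ i : RA,
      A p.1 i * star (R i x_2) * B x_2 p.2 *
        (star (A q.1 x_1) * star (star (R x_1 x)) * star (B x q.2))) =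
    ∑ i : RA, ∑ x_2 : RB, ∑ x_1 : RA, ∑ x : RB,
      A p.1 i * star (R i x_2) * B x_2 p.2 *
        (star (A q.1 x_1) * star (star (R x_1 x)) * star (B x q.2)) from
    (sum4_rev _).symm]
  refine Finset.sum_congr rfl fun x _ => Finset.sum_congr rfl fun x1 _ =>
    Finset.sum_congr rfl fun x2 _ => Finset.sum_congr rfl fun x3 _ => ?_
  simp only [star_star]
  ring
end
end

section
/- Let {Uᵢ}_{i=1,…,d²} be a unitary error basis of d×d matrices containing the identity matrix. If {Uᵢ} is equivalent to a nice error basis (i.e., there exist unitaries W₁, W₂ and unit phases cᵢ with {cᵢW₁UᵢW₂}ᵢ nice), then {Uᵢ} is itself a nice error basis. -/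
open Matrix

noncomputable section

/-- A family of unitary matrices that is linearly independent: a unitary error basis. -/
def IsUnitaryErrorBasis {d n : ℕ} (U : Fin n → Matrix (Fin d) (Fin d) ℂ) : Prop :=
  (∀ i, (U i)ᴴ * U i = 1) ∧ LinearIndependent ℂ U

/-- A nice error basis: a unitary error basis closed under multiplication up to unit phases. -/
def IsNiceErrorBasis {d n : ℕ} (U : Fin n → Matrix (Fin d) (Fin d) ℂ) : Prop :=
  IsUnitaryErrorBasis U ∧
    ∀ i j, ∃ (c : ℂ) (k : Fin n), ‖c‖ = 1 ∧ U i * U j = c • U k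

/-- A unitary error basis containing the identity matrix that is equivalent to a nice error
basis (via unitaries `W₁, W₂` and unit phases `cᵢ`) is itself a nice error basis. -/
theorem ueb_with_id_equiv_nice_is_nice {d : ℕ} (U : Fin (d ^ 2) → Matrix (Fin d) (Fin d) ℂ)
    (hU : IsUnitaryErrorBasis U)
    (hId : ∃ i₀, U i₀ = 1)
    (hequiv : ∃ (W₁ W₂ : Matrix (Fin d) (Fin d) ℂ) (c : Fin (d ^ 2) → ℂ),
      W₁ᴴ * W₁ = 1 ∧ W₂ᴴ * W₂ = 1 ∧ (∀ i, ‖c i‖ = 1) ∧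
      IsNiceErrorBasis (fun i => c i • (W₁ * U i * W₂))) :
    IsNiceErrorBasis U := by
  obtain ⟨W₁, W₂, c, hW₁, hW₂, hc, ⟨_, hmul⟩⟩ := hequiv
  obtain ⟨i₀, hi₀⟩ := hId
  obtain ⟨M, hMdef⟩ : ∃ M : Matrix (Fin d) (Fin d) ℂ, M = W₂ * W₁ := ⟨_, rfl⟩
  have hW₂' : W₂ * W₂ᴴ = 1 := mul_eq_one_comm.mp hW₂
  have hMM : M * Mᴴ = 1 := by
    have : Mᴴ * M = 1 := by
      simp only [hMdef, conjTranspose_mul]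
      calc W₁ᴴ * W₂ᴴ * (W₂ * W₁) = W₁ᴴ * (W₂ᴴ * W₂) * W₁ := by simp only [mul_assoc]
        _ = 1 := by rw [hW₂]; simpa using hW₁
    exact mul_eq_one_comm.mp this
  have hc0 : ∀ i, c i ≠ 0 := by
    intro i h
    have := hc i
    rw [h] at this; simp at this
  -- key injectivity of X ↦ W₁ X W₂
  have cancel : ∀ Z : Matrix (Fin d) (Fin d) ℂ, W₁ᴴ * (W₁ * Z * W₂) * W₂ᴴ = Z := by
    intro Z
    calc W₁ᴴ * (W₁ * Z * W₂) * W₂ᴴ = (W₁ᴴ * W₁) * Z * (W₂ * W₂ᴴ) := by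
          simp only [mul_assoc]
      _ = Z := by rw [hW₁, hW₂']; simp
  have key : ∀ X Y : Matrix (Fin d) (Fin d) ℂ, W₁ * X * W₂ = W₁ * Y * W₂ → X = Y := by
    intro X Y h
    have h2 := congrArg (fun Z => W₁ᴴ * Z * W₂ᴴ) h
    rw [cancel, cancel] at h2
    exact h2
  -- property P
  have hP : ∀ i j, ∃ (p : ℂ) (k : Fin (d ^ 2)), ‖p‖ = 1 ∧ U i * M * U j = p • U k := by
    intro i j
    obtain ⟨e, k, he, hek⟩ := hmul i j
    simp only at hek
    refine ⟨e * c k / (c i * c j), k, ?_, ?_⟩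
    · simp [norm_div, norm_mul, he, hc]
    · have h1 : (c i * c j) • (W₁ * (U i * M * U j) * W₂) =
          (e * c k) • (W₁ * U k * W₂) := by
        have h0 : (c i • (W₁ * U i * W₂)) * (c j • (W₁ * U j * W₂)) =
            (c i * c j) • (W₁ * (U i * M * U j) * W₂) := by
          simp only [Matrix.smul_mul, Matrix.mul_smul, smul_smul, hMdef, mul_assoc]
          rw [mul_comm (c j) (c i)]
        rw [h0, smul_smul] at hek
        exact hek
      have h2 : W₁ * (U i * M * U j) * W₂ =
          W₁ * ((e * c k / (c i * c j)) • U k) * W₂ := by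
        have hcc : (c i * c j) ≠ 0 := mul_ne_zero (hc0 i) (hc0 j)
        rw [Matrix.mul_smul, Matrix.smul_mul]
        rw [div_eq_mul_inv, mul_comm, ← smul_smul]
        rw [← h1, smul_smul, inv_mul_cancel₀ hcc, one_smul]
      exact key _ _ h2
  -- σ from j = i₀
  have hP' : ∀ i, ∃ (p : ℂ) (k : Fin (d ^ 2)), ‖p‖ = 1 ∧ U i * M = p • U k := by
    intro i
    obtain ⟨p, k, hp, h⟩ := hP i i₀
    exact ⟨p, k, hp, by rwa [hi₀, mul_one] at h⟩
  choose p σ hp hσ using hP'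
  have hp0 : ∀ i, p i ≠ 0 := fun i h => by have := hp i; rw [h] at this; simp at this
  -- linear independence lemma
  have hlin : ∀ (a : ℂ), a ≠ 0 → ∀ i j, U i = a • U j → i = j := by
    intro a ha i j h
    by_contra hne
    have hli := linearIndependent_iff'.mp hU.2
    have := hli {i, j} (fun x => if x = i then 1 else -a) ?_ i (by simp)
    · simp at this
    · rw [Finset.sum_pair hne]
      simp only [if_pos rfl, if_neg (Ne.symm hne)]
      rw [h]; simp
  have hσinj : Function.Injective σ := by
    intro i i' h
    have h1 : U i = (p i / p i') • U i' := by
      have e1 : U i = (p i) • U (σ i) * Mᴴ := by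
        rw [← hσ i, mul_assoc, hMM, mul_one]
      have e2 : U i' = (p i') • U (σ i) * Mᴴ := by
        rw [h, ← hσ i', mul_assoc, hMM, mul_one]
      rw [e1, e2, Matrix.smul_mul, Matrix.smul_mul, smul_smul]
      congr 1
      rw [div_mul_cancel₀ _ (hp0 i')]
    have hdiv : p i / p i' ≠ 0 := div_ne_zero (hp0 i) (hp0 i')
    exact hlin _ hdiv i i' h1
  have hσsurj : Function.Surjective σ := Finite.surjective_of_injective hσinj
  refine ⟨hU, fun i j => ?_⟩
  obtain ⟨i', hi'⟩ := hσsurj i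
  obtain ⟨q, k, hq, hqk⟩ := hP i' j
  refine ⟨q / p i', k, ?_, ?_⟩
  · simp [norm_div, hq, hp]
  · have : (p i' • U i) * U j = q • U k := by
      rw [← hi', ← hσ i', hqk]
    rw [Matrix.smul_mul] at this
    calc U i * U j = (p i')⁻¹ • (p i' • (U i * U j)) := by
          rw [smul_smul, inv_mul_cancel₀ (hp0 i'), one_smul]
      _ = (p i')⁻¹ • (q • U k) := by rw [this]
      _ = (q / p i') • U k := by rw [smul_smul, div_eq_mul_inv, mul_comm]
end
end

section
/- Let {Mᵢ}_{i=1,…,d²} be d×d matrices such that {|Mᵢ⟩⟩}ᵢ is an orthonormal basis of ℂ^d ⊗ ℂ^d, each Mᵢ is invertible, and for all i,j,k there exists l with Mᵢ Mⱼ⁻¹ M_k ∝ M_l. Then every Mᵢ satisfies Mᵢ Mᵢ† = (1/d) I_d; that is, each √d·Mᵢ is unitary and {|Mᵢ⟩⟩}ᵢ is a maximally entangled basis. -/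
open Matrix

/-! If `A` is invertible and `A Mₖ` is a multiple of some `Mₗ` for every `k`, then left
multiplication by `A` maps distinct `Mₖ` to trace-orthogonal matrices (two of them on the same
line would make `Mₖ, Mₘ` proportional after cancelling `A`). Hence `AᴴA Mₘ ∝ Mₘ`, and since
`Mₘ` is invertible, `AᴴA` is scalar. Taking `A = Mⱼ Mₘ⁻¹` and comparing traces gives
`MⱼᴴMⱼ = MₘᴴMₘ`; the hypotheses are stable under `ᴴ`, so also `MⱼMⱼᴴ = MₘMₘᴴ`.
With `Q = MᵢᴴMᵢ` and `P = MᵢMᵢᴴ` we get `Mⱼ Q = P Mⱼ` for all `j`, so `X Q = P X` for all `X`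
because the `Mⱼ` span. Taking `X = 1` gives `P = Q`, so `P` is central, hence scalar, and
`tr P = 1` makes it `d⁻¹ • 1`. -/

section

variable {K n ι : Type*} [Field K] [Fintype n]

theorem Matrix.eq_inv_card_smul_one_of_mem_center [DecidableEq n] {P : Matrix n n K}
    (hP : P ∈ Set.center (Matrix n n K)) (htr : P.trace = 1) :
    P = (Fintype.card n : K)⁻¹ • 1 := by
  rw [center_eq_range] at hP
  obtain ⟨r, rfl⟩ := hP
  rw [scalar_apply, ← smul_one_eq_diagonal, trace_smul, trace_one, smul_eq_mul] at htr
  rw [scalar_apply, ← smul_one_eq_diagonal, eq_inv_of_mul_eq_one_left htr]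

variable [StarRing K] [DecidableEq ι]

def TraceOrthonormal (N : ι → Matrix n n K) : Prop :=
  ∀ i j, ((N i)ᴴ * N j).trace = if i = j then 1 else 0

namespace TraceOrthonormal

variable {N : ι → Matrix n n K}

theorem conjTranspose (hN : TraceOrthonormal N) : TraceOrthonormal fun i => (N i)ᴴ := by
  intro i j
  rw [conjTranspose_conjTranspose, trace_mul_comm, hN j i]
  exact if_congr eq_comm rfl rfl

theorem trace_conjTranspose_mul_mul_eq_zero [DecidableEq n] (hN : TraceOrthonormal N)
    {A : Matrix n n K} (hA : IsUnit A) (hlines : ∀ k, ∃ (l : ι) (α : K), A * N k = α • N l)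
    {k m : ι} (hkm : k ≠ m) :
    ((A * N k)ᴴ * (A * N m)).trace = 0 := by
  obtain ⟨l, α, hl⟩ := hlines k
  obtain ⟨l', β, hl'⟩ := hlines m
  rw [hl, hl', conjTranspose_smul, Matrix.smul_mul, Matrix.mul_smul, trace_smul, trace_smul,
    hN l l']
  split_ifs with hll
  · subst hll
    have hprop : β • N k = α • N m := hA.mul_left_cancel <| by
      rw [Matrix.mul_smul, Matrix.mul_smul, hl, hl', smul_comm]
    have hα : α = 0 := by
      simpa [hN m k, hN m m, Ne.symm hkm, eq_comm] using
        congrArg (fun X => ((N m)ᴴ * X).trace) hprop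
    simp [hα]
  · simp

variable [Fintype ι]

theorem trace_conjTranspose_mul_sum (hN : TraceOrthonormal N) (c : ι → K) (j : ι) :
    ((N j)ᴴ * ∑ i, c i • N i).trace = c j := by
  simp [Matrix.mul_sum, trace_sum, hN j]

theorem linearIndependent (hN : TraceOrthonormal N) : LinearIndependent K N :=
  Fintype.linearIndependent_iff.mpr fun c hc j => by
    simpa [hc] using (hN.trace_conjTranspose_mul_sum c j).symm

theorem span_eq_top (hN : TraceOrthonormal N)
    (hcard : Fintype.card ι = Fintype.card n * Fintype.card n) :
    Submodule.span K (Set.range N) = ⊤ :=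
  hN.linearIndependent.span_eq_top_of_card_eq_finrank' <| by
    rw [hcard, Module.finrank_matrix, Module.finrank_self, mul_one]

theorem sum_trace_smul (hN : TraceOrthonormal N)
    (hcard : Fintype.card ι = Fintype.card n * Fintype.card n) (X : Matrix n n K) :
    ∑ k, ((N k)ᴴ * X).trace • N k = X := by
  obtain ⟨c, rfl⟩ := (Submodule.mem_span_range_iff_exists_fun K).mp
    (hN.span_eq_top hcard ▸ Submodule.mem_top : X ∈ Submodule.span K (Set.range N))
  simp_rw [hN.trace_conjTranspose_mul_sum]

theorem eq_trace_smul_of_trace_eq_zero (hN : TraceOrthonormal N)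
    (hcard : Fintype.card ι = Fintype.card n * Fintype.card n) {X : Matrix n n K} {m : ι}
    (h : ∀ k ≠ m, ((N k)ᴴ * X).trace = 0) : X = ((N m)ᴴ * X).trace • N m := by
  conv_lhs => rw [← hN.sum_trace_smul hcard X]
  exact Fintype.sum_eq_single m fun k hk => by rw [h k hk, zero_smul]

theorem mul_eq_mul_of_forall (hN : TraceOrthonormal N)
    (hcard : Fintype.card ι = Fintype.card n * Fintype.card n) {P Q : Matrix n n K}
    (h : ∀ i, N i * Q = P * N i) (X : Matrix n n K) : X * Q = P * X := by
  rw [← hN.sum_trace_smul hcard X, Finset.sum_mul, Finset.mul_sum]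
  simp_rw [Matrix.smul_mul, Matrix.mul_smul, h]

theorem conjTranspose_mul_self_eq_smul_one [DecidableEq n] (hN : TraceOrthonormal N)
    (hcard : Fintype.card ι = Fintype.card n * Fintype.card n) {A : Matrix n n K}
    (hA : IsUnit A) (hlines : ∀ k, ∃ (l : ι) (α : K), A * N k = α • N l) {m : ι}
    (hm : IsUnit (N m)) : ∃ c : K, Aᴴ * A = c • 1 := by
  have hAA : Aᴴ * A * N m = ((N m)ᴴ * (Aᴴ * A * N m)).trace • N m :=
    hN.eq_trace_smul_of_trace_eq_zero hcard fun k hk => by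
      rw [show (N k)ᴴ * (Aᴴ * A * N m) = (A * N k)ᴴ * (A * N m) by
        simp only [conjTranspose_mul, Matrix.mul_assoc]]
      exact hN.trace_conjTranspose_mul_mul_eq_zero hA hlines hk
  exact ⟨_, hm.mul_right_cancel (by rw [hAA, Matrix.smul_mul, Matrix.one_mul])⟩

theorem conjTranspose_mul_self_eq [DecidableEq n] (hN : TraceOrthonormal N)
    (hcard : Fintype.card ι = Fintype.card n * Fintype.card n) (hinv : ∀ i, IsUnit (N i))
    (hclosed : ∀ i j k, ∃ (l : ι) (α : K), N i * (N j)⁻¹ * N k = α • N l) (j m : ι) :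
    (N j)ᴴ * N j = (N m)ᴴ * N m := by
  set A := N j * (N m)⁻¹
  have hA : IsUnit A := (hinv j).mul ((isUnit_nonsing_inv_iff).mpr (hinv m))
  obtain ⟨c, hc⟩ := hN.conjTranspose_mul_self_eq_smul_one hcard hA (hclosed j m) (hinv m)
  have hj : N j = A * N m :=
    (nonsing_inv_mul_cancel_right (N m) (N j) ((isUnit_iff_isUnit_det _).mp (hinv m))).symm
  have hsc : (N j)ᴴ * N j = c • ((N m)ᴴ * N m) := by
    rw [hj, conjTranspose_mul, Matrix.mul_assoc, ← Matrix.mul_assoc Aᴴ, hc, Matrix.smul_mul,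
      Matrix.one_mul, Matrix.mul_smul]
  have hc1 : c = 1 := by
    simpa [hN j j, hN m m] using (congrArg trace hsc).symm
  rw [hsc, hc1, one_smul]

theorem mul_conjTranspose_self_eq [DecidableEq n] (hN : TraceOrthonormal N)
    (hcard : Fintype.card ι = Fintype.card n * Fintype.card n) (hinv : ∀ i, IsUnit (N i))
    (hclosed : ∀ i j k, ∃ (l : ι) (α : K), N i * (N j)⁻¹ * N k = α • N l) (j m : ι) :
    N j * (N j)ᴴ = N m * (N m)ᴴ := by
  have hclosed' : ∀ i j k, ∃ (l : ι) (α : K), (N i)ᴴ * (N j)ᴴ⁻¹ * (N k)ᴴ = α • (N l)ᴴ := by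
    intro i j k
    obtain ⟨l, α, h⟩ := hclosed k j i
    refine ⟨l, star α, ?_⟩
    rw [← conjTranspose_nonsing_inv, ← conjTranspose_mul, ← conjTranspose_mul,
      ← Matrix.mul_assoc, h, conjTranspose_smul]
  simpa using hN.conjTranspose.conjTranspose_mul_self_eq hcard
    (fun i => (isUnit_conjTranspose _).mpr (hinv i)) hclosed' j m

end TraceOrthonormal

end

theorem closure_implies_maximally_entangled_general {d : ℕ}
    (M : Fin (d ^ 2) → Matrix (Fin d) (Fin d) ℂ)
    (hinv : ∀ i, IsUnit (M i))
    (horth : ∀ i j, ((M i)ᴴ * M j).trace = if i = j then 1 else 0)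
    (hclosed : ∀ i j k, ∃ (l : Fin (d ^ 2)) (α : ℂ), M i * (M j)⁻¹ * M k = α • M l) :
    ∀ i, M i * (M i)ᴴ = ((d : ℂ))⁻¹ • 1 := by
  intro i
  have hN : TraceOrthonormal M := horth
  have hcard : Fintype.card (Fin (d ^ 2)) = Fintype.card (Fin d) * Fintype.card (Fin d) := by
    simp [sq]
  have hcomm : ∀ X, X * ((M i)ᴴ * M i) = M i * (M i)ᴴ * X :=
    hN.mul_eq_mul_of_forall hcard fun j => by
      rw [← hN.conjTranspose_mul_self_eq hcard hinv hclosed j i,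
        ← hN.mul_conjTranspose_self_eq hcard hinv hclosed j i, Matrix.mul_assoc]
  have hQP : (M i)ᴴ * M i = M i * (M i)ᴴ := by simpa using hcomm 1
  have hcentral : M i * (M i)ᴴ ∈ Set.center (Matrix (Fin d) (Fin d) ℂ) :=
    Semigroup.mem_center_iff.mpr fun X => by rw [← hcomm X, hQP]
  have htr : (M i * (M i)ᴴ).trace = 1 := by
    simpa [trace_mul_comm (M i)] using hN i i
  simpa using Matrix.eq_inv_card_smul_one_of_mem_center hcentral htr

/-- If `{|Mᵢ⟩⟩}` is an orthonormal basis of `ℂ^d ⊗ ℂ^d` (i.e. `Tr[Mᵢ†Mⱼ] = δᵢⱼ`), each `Mᵢ`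
is invertible, and for all `i,j,k` there is `l` with `Mᵢ Mⱼ⁻¹ M_k ∝ M_l`, then every `Mᵢ`
satisfies `Mᵢ Mᵢ† = (1/d)·I`; that is, each `√d·Mᵢ` is unitary and `{|Mᵢ⟩⟩}` is a maximally
entangled basis. -/
theorem closure_implies_maximally_entangled {d : ℕ} (hd : 0 < d)
    (M : Fin (d ^ 2) → Matrix (Fin d) (Fin d) ℂ)
    (hinv : ∀ i, IsUnit (M i))
    (horth : ∀ i j, ((M i)ᴴ * M j).trace = if i = j then 1 else 0)
    (hclosed : ∀ i j k, ∃ (l : Fin (d ^ 2)) (α : ℂ), M i * (M j)⁻¹ * M k = α • M l) :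
    ∀ i, M i * (M i)ᴴ = ((d : ℂ))⁻¹ • 1 :=
  closure_implies_maximally_entangled_general M hinv horth hclosed
end

section
/- Let {Mᵢ}_{i=1,…,d²} be d×d matrices with {|Mᵢ⟩⟩}ᵢ an orthonormal basis of ℂ^d ⊗ ℂ^d, each Mᵢ invertible, and pairwise non-proportional. Then the triple-product closure condition — for all i,j,k there exists l with Mᵢ Mⱼ⁻¹ M_k ∝ M_l — holds if and only if for every j the family {Mⱼ⁻¹ Mᵢ}_{i=1,…,d²} (suitably normalized) is a nice error basis. -/
open Matrix

noncomputable section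

/-!
Write `Nᵢ = Mⱼ⁻¹ Mᵢ`. Triple-product closure of `M` is the same as `Nᵢ Nₖ ∝ Nₗ`, which gives the
reverse direction at once. For the forward one, rescale each `Nᵢ` to `|det| = 1`: the phases in
`Nᵢ Nₖ = α Nₗ` become unimodular and, by non-proportionality, `i ↦ l` is a permutation, so
`P = ∑ᵢ Nᵢᴴ Nᵢ` satisfies `Nₖᴴ P Nₖ = P`. Completeness of the orthonormal family `M` gives
`∑ₖ Mₖᴴ X Mₖ = tr X • 1`, which forces `P` to be scalar; hence every rescaled `Nₖ` is unitary, and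
`tr (Mₖᴴ Mₖ) = tr (Mⱼᴴ Mⱼ)` shows that the rescaling was trivial.
-/

def ProjectivelyClosed {ι n : Type*} [Fintype n] (N : ι → Matrix n n ℂ) : Prop :=
  ∀ i k, ∃ (l : ι) (α : ℂ), N i * N k = α • N l

def PairwiseNonProportional {ι n : Type*} (N : ι → Matrix n n ℂ) : Prop :=
  ∀ i j, (∃ α : ℂ, N i = α • N j) → i = j

section

variable {ι m n : Type*}

theorem PairwiseNonProportional.smul {N : ι → Matrix n n ℂ} (h : PairwiseNonProportional N)
    {s : ι → ℂ} (hs : ∀ i, s i ≠ 0) : PairwiseNonProportional fun i => s i • N i := by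
  rintro i j ⟨α, hα⟩
  refine h i j ⟨(s i)⁻¹ * α * s j, ?_⟩
  rw [← smul_smul, ← smul_smul, ← hα, smul_smul, inv_mul_cancel₀ (hs i), one_smul]

theorem conjTranspose_smul_mul_smul [Fintype m] (α : ℂ) (A : Matrix m n ℂ) (P : Matrix m m ℂ) :
    (α • A)ᴴ * P * (α • A) = (‖α‖ : ℂ) ^ 2 • (Aᴴ * P * A) := by
  rw [conjTranspose_smul, Matrix.smul_mul, Matrix.smul_mul, Matrix.mul_smul, smul_smul,
    Complex.star_def, Complex.conj_mul']

variable [Fintype n]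

theorem ProjectivelyClosed.smul {N : ι → Matrix n n ℂ} (h : ProjectivelyClosed N) {s : ι → ℂ}
    (hs : ∀ i, s i ≠ 0) : ProjectivelyClosed fun i => s i • N i := by
  intro i k
  obtain ⟨l, α, hα⟩ := h i k
  refine ⟨l, s i * s k * α / s l, ?_⟩
  rw [smul_mul_smul, hα, smul_smul, smul_smul, div_mul_cancel₀ _ (hs l)]

open scoped ComplexOrder in
theorem sum_conjTranspose_mul_self_ne_zero [Fintype m] [Fintype ι] {U : ι → Matrix m n ℂ} {j : ι}
    (hj : U j ≠ 0) : ∑ i, (U i)ᴴ * U i ≠ 0 := by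
  intro h
  have htr := congrArg trace h
  rw [trace_sum, trace_zero, Finset.sum_eq_zero_iff_of_nonneg fun i _ =>
    (posSemidef_conjTranspose_mul_self (U i)).trace_nonneg] at htr
  exact hj (trace_conjTranspose_mul_self_eq_zero_iff.mp (htr j (Finset.mem_univ j)))

variable [DecidableEq n]

theorem PairwiseNonProportional.mul_left {N : ι → Matrix n n ℂ} (h : PairwiseNonProportional N)
    {A : Matrix n n ℂ} (hA : IsUnit A) : PairwiseNonProportional fun i => A * N i := by
  rintro i j ⟨α, hα⟩
  exact h i j ⟨α, hA.mul_right_injective (by rw [← Matrix.mul_smul] at hα; exact hα)⟩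

theorem smul_mem_unitaryGroup {α : ℂ} (hα : ‖α‖ = 1) {U : Matrix n n ℂ}
    (hU : U ∈ unitaryGroup n ℂ) : α • U ∈ unitaryGroup n ℂ := by
  rw [mem_unitaryGroup_iff', star_eq_conjTranspose] at hU ⊢
  simpa [hα, hU] using conjTranspose_smul_mul_smul α U 1

theorem norm_det_of_mem_unitaryGroup {U : Matrix n n ℂ} (hU : U ∈ unitaryGroup n ℂ) :
    ‖U.det‖ = 1 :=
  CStarRing.norm_of_mem_unitary (det_of_mem_unitary hU)

theorem trace_conjTranspose_mul_self_mul_unitary [Fintype m] (B : Matrix m n ℂ) {U : Matrix n n ℂ}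
    (hU : U ∈ unitaryGroup n ℂ) : ((B * U)ᴴ * (B * U)).trace = (Bᴴ * B).trace := by
  rw [conjTranspose_mul, Matrix.mul_assoc, trace_mul_comm, Matrix.mul_assoc, Matrix.mul_assoc,
    ← star_eq_conjTranspose, mem_unitaryGroup_iff.mp hU, Matrix.mul_one]

theorem norm_eq_one_of_mul_eq_smul [Nonempty n] {A B C : Matrix n n ℂ} {α : ℂ}
    (hA : ‖A.det‖ = 1) (hB : ‖B.det‖ = 1) (hC : ‖C.det‖ = 1) (h : A * B = α • C) : ‖α‖ = 1 := by
  have h' := congrArg (fun X => ‖X.det‖) h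
  simp only [det_mul, det_smul, norm_mul, norm_pow, hA, hB, hC, mul_one] at h'
  exact (pow_eq_one_iff_of_nonneg (norm_nonneg α) Fintype.card_ne_zero).mp h'.symm

theorem exists_pos_norm_det_smul_eq_one [Nonempty n] {A : Matrix n n ℂ} (hA : IsUnit A) :
    ∃ s : ℝ, 0 < s ∧ ‖((s : ℂ) • A).det‖ = 1 := by
  have hδ : 0 < ‖A.det‖ := norm_pos_iff.mpr ((isUnit_iff_isUnit_det A).mp hA).ne_zero
  have hcard : (Fintype.card n : ℝ) ≠ 0 := Nat.cast_ne_zero.mpr Fintype.card_ne_zero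
  refine ⟨‖A.det‖ ^ (-(Fintype.card n : ℝ)⁻¹), Real.rpow_pos_of_pos hδ _, ?_⟩
  rw [det_smul, norm_mul, norm_pow, Complex.norm_real, Real.norm_of_nonneg (by positivity),
    ← Real.rpow_natCast, ← Real.rpow_mul hδ.le, neg_mul, inv_mul_cancel₀ hcard, Real.rpow_neg_one,
    inv_mul_cancel₀ hδ.ne']

theorem projectivelyClosed_inv_mul_iff {M : ι → Matrix n n ℂ} {j : ι} (hj : IsUnit (M j)) :
    ProjectivelyClosed (fun i => (M j)⁻¹ * M i) ↔
      ∀ i k, ∃ (l : ι) (α : ℂ), M i * (M j)⁻¹ * M k = α • M l := by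
  have hj' : IsUnit (M j).det := (isUnit_iff_isUnit_det _).mp hj
  have hmul : ∀ i k, (M j)⁻¹ * M i * ((M j)⁻¹ * M k) = (M j)⁻¹ * (M i * (M j)⁻¹ * M k) :=
    fun i k => by simp only [mul_assoc]
  refine forall₂_congr fun i k => exists₂_congr fun l α => ?_
  rw [hmul, ← Matrix.mul_smul]
  exact ⟨fun h => by simpa only [mul_nonsing_inv_cancel_left _ _ hj'] using congrArg (M j * ·) h,
    fun h => by rw [h]⟩

variable [Fintype ι]

theorem conjTranspose_mul_sum_conjTranspose_mul_self_mul [Nonempty n] {U : ι → Matrix n n ℂ}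
    (hdet : ∀ i, ‖(U i).det‖ = 1) (hnp : PairwiseNonProportional U) (hcl : ProjectivelyClosed U)
    (k : ι) : (U k)ᴴ * (∑ i, (U i)ᴴ * U i) * U k = ∑ i, (U i)ᴴ * U i := by
  choose l α hα using hcl
  have hα_norm : ∀ i, ‖α i k‖ = 1 := fun i =>
    norm_eq_one_of_mul_eq_smul (hdet i) (hdet k) (hdet _) (hα i k)
  have hUk : IsUnit (U k) :=
    (isUnit_iff_isUnit_det _).mpr (isUnit_iff_ne_zero.mpr (norm_ne_zero_iff.mp (by simp [hdet])))
  have hl : Function.Bijective (l · k) := by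
    refine Finite.injective_iff_bijective.mp fun i i' hii' => hnp i i' ⟨α i k / α i' k, ?_⟩
    have hα0 : α i' k ≠ 0 := norm_ne_zero_iff.mp (by simp [hα_norm])
    apply hUk.mul_left_injective
    simp only at hii' ⊢
    rw [smul_mul_assoc, hα, hα i' k, hii', smul_smul, div_mul_cancel₀ _ hα0]
  calc (U k)ᴴ * (∑ i, (U i)ᴴ * U i) * U k = ∑ i, (U i * U k)ᴴ * 1 * (U i * U k) := by
        simp only [Finset.mul_sum, Finset.sum_mul, conjTranspose_mul, Matrix.mul_one, mul_assoc]
    _ = ∑ i, (U (l i k))ᴴ * U (l i k) := by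
        refine Finset.sum_congr rfl fun i _ => ?_
        rw [hα, conjTranspose_smul_mul_smul, hα_norm, Complex.ofReal_one, one_pow, one_smul,
          Matrix.mul_one]
    _ = ∑ i, (U i)ᴴ * U i := hl.sum_comp fun i => (U i)ᴴ * U i

theorem exists_smul_mem_unitaryGroup [Nonempty n] {N : ι → Matrix n n ℂ}
    (hunit : ∀ i, IsUnit (N i)) (hnp : PairwiseNonProportional N) (hcl : ProjectivelyClosed N)
    (hsum : ∀ Y, ∃ c : ℂ, ∑ k, (N k)ᴴ * Y * N k = c • 1) (k : ι) :
    ∃ s : ℂ, s ≠ 0 ∧ s • N k ∈ unitaryGroup n ℂ := by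
  choose s hs_pos hs_det using fun i => exists_pos_norm_det_smul_eq_one (hunit i)
  have hs : ∀ i, (s i : ℂ) ≠ 0 := fun i => Complex.ofReal_ne_zero.mpr (hs_pos i).ne'
  set U := fun i => (s i : ℂ) • N i
  set P := ∑ i, (U i)ᴴ * U i
  have hP : ∀ k, (U k)ᴴ * P * U k = P := fun k =>
    conjTranspose_mul_sum_conjTranspose_mul_self_mul hs_det (hnp.smul hs) (hcl.smul hs) k
  -- `∑ₖ Nₖᴴ P Nₖ` is a positive multiple of `P` and, by `hsum`, a scalar matrix.
  obtain ⟨p, hp⟩ : ∃ p : ℂ, P = p • 1 := by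
    obtain ⟨c, hc⟩ := hsum P
    have hw : ∀ k, (‖(s k : ℂ)⁻¹‖ : ℂ) ^ 2 • P = (N k)ᴴ * P * N k := fun k => by
      have hNU : N k = (s k : ℂ)⁻¹ • U k := by
        simp only [U, smul_smul, inv_mul_cancel₀ (hs k), one_smul]
      rw [hNU, conjTranspose_smul_mul_smul, hP k]
    have hw0 : (∑ k, (‖(s k : ℂ)⁻¹‖ : ℂ) ^ 2) ≠ 0 := by
      have hpos : ∀ k, 0 < ‖(s k : ℂ)⁻¹‖ ^ 2 := fun k =>
        pow_pos (norm_pos_iff.mpr (inv_ne_zero (hs k))) 2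
      exact_mod_cast (Finset.sum_pos (fun k _ => hpos k) ⟨k, Finset.mem_univ k⟩).ne'
    refine ⟨(∑ k, (‖(s k : ℂ)⁻¹‖ : ℂ) ^ 2)⁻¹ * c, ?_⟩
    rw [← smul_smul, ← hc, ← Finset.sum_congr rfl fun k _ => hw k, ← Finset.sum_smul,
      smul_smul, inv_mul_cancel₀ hw0, one_smul]
  have hp0 : p ≠ 0 := by
    rintro rfl
    exact sum_conjTranspose_mul_self_ne_zero (U := U) (smul_ne_zero (hs k) (hunit k).ne_zero)
      (hp.trans (zero_smul ℂ 1))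
  refine ⟨s k, hs k, mem_unitaryGroup_iff'.mpr (smul_right_injective _ hp0 ?_)⟩
  have hk := hP k
  rw [hp, Matrix.mul_smul (U k)ᴴ p 1, Matrix.mul_one, Matrix.smul_mul p (U k)ᴴ (U k)] at hk
  exact hk

variable [DecidableEq ι] {M : ι → Matrix n n ℂ}

theorem sum_star_mul_eq_of_orthonormal (hcard : Fintype.card ι = Fintype.card n ^ 2)
    (horth : ∀ i j, ((M i)ᴴ * M j).trace = if i = j then 1 else 0) (a p b q : n) :
    ∑ i, star (M i a p) * M i b q = if (a, p) = (b, q) then 1 else 0 := by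
  let V : Matrix ι (n × n) ℂ := of fun i x => M i x.1 x.2
  have hV : V * Vᴴ = 1 := by
    ext i k
    have hVik : (V * Vᴴ) i k = ((M k)ᴴ * M i).trace := by
      simp only [mul_apply, trace, diag, conjTranspose_apply, V, of_apply, Fintype.sum_prod_type]
      rw [Finset.sum_comm]
      simp_rw [mul_comm]
    rw [hVik, horth, one_apply]
    exact if_congr eq_comm rfl rfl
  have hcompl := congrFun (congrFun ((mul_eq_one_comm_of_equiv
    (Fintype.equivOfCardEq (by simp [hcard, sq]))).mp hV) (a, p)) (b, q)
  simpa [mul_apply, V, one_apply] using hcompl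

theorem sum_conjTranspose_mul_mul_eq_trace_smul_one
    (hcard : Fintype.card ι = Fintype.card n ^ 2)
    (horth : ∀ i j, ((M i)ᴴ * M j).trace = if i = j then 1 else 0) (X : Matrix n n ℂ) :
    ∑ i, (M i)ᴴ * X * M i = X.trace • (1 : Matrix n n ℂ) := by
  ext p q
  calc (∑ i, (M i)ᴴ * X * M i) p q = ∑ a, ∑ b, X a b * ∑ i, star (M i a p) * M i b q := by
        simp only [Matrix.sum_apply, mul_apply, conjTranspose_apply, Finset.mul_sum, Finset.sum_mul]
        conv_lhs => rw [Finset.sum_comm]; enter [2, b]; rw [Finset.sum_comm]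
        rw [Finset.sum_comm]
        refine Finset.sum_congr rfl fun a _ => Finset.sum_congr rfl fun b _ =>
          Finset.sum_congr rfl fun i _ => by ring
    _ = (X.trace • (1 : Matrix n n ℂ)) p q := by
        simp only [sum_star_mul_eq_of_orthonormal hcard horth, Prod.mk.injEq]
        simp [trace, one_apply, ite_and]

theorem linearIndependent_of_orthonormal
    (horth : ∀ i j, ((M i)ᴴ * M j).trace = if i = j then 1 else 0) : LinearIndependent ℂ M := by
  rw [Fintype.linearIndependent_iff]
  intro g hg k
  have h := congrArg (fun A => ((M k)ᴴ * A).trace) hg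
  simpa [Matrix.mul_sum, trace_sum, horth] using h

theorem inv_mul_mem_unitaryGroup [Nonempty n] (hcard : Fintype.card ι = Fintype.card n ^ 2)
    (hinv : ∀ i, IsUnit (M i))
    (horth : ∀ i j, ((M i)ᴴ * M j).trace = if i = j then 1 else 0)
    (hnp : PairwiseNonProportional M)
    (hcl : ∀ i j k, ∃ (l : ι) (α : ℂ), M i * (M j)⁻¹ * M k = α • M l) (j i : ι) :
    (M j)⁻¹ * M i ∈ unitaryGroup n ℂ := by
  have hMj : IsUnit (M j)⁻¹ := isUnit_nonsing_inv_iff.mpr (hinv j)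
  have hsum : ∀ Y, ∃ c : ℂ, ∑ k, ((M j)⁻¹ * M k)ᴴ * Y * ((M j)⁻¹ * M k) = c • 1 := fun Y =>
    ⟨_, by simpa only [conjTranspose_mul, mul_assoc] using
      sum_conjTranspose_mul_mul_eq_trace_smul_one hcard horth (((M j)⁻¹)ᴴ * Y * (M j)⁻¹)⟩
  obtain ⟨s, hs, hU⟩ := exists_smul_mem_unitaryGroup (fun i => hMj.mul (hinv i))
    (hnp.mul_left hMj) ((projectivelyClosed_inv_mul_iff (hinv j)).mpr (hcl · j ·)) hsum i
  have hMi : M i = s⁻¹ • (M j * (s • ((M j)⁻¹ * M i))) := by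
    rw [Matrix.mul_smul, mul_nonsing_inv_cancel_left _ _ ((isUnit_iff_isUnit_det _).mp (hinv j)),
      smul_smul, inv_mul_cancel₀ hs, one_smul]
  have hs_norm : ‖s⁻¹‖ = 1 := by
    have htr := horth i i
    rw [hMi, ← Matrix.mul_one (s⁻¹ • _)ᴴ, conjTranspose_smul_mul_smul, Matrix.mul_one,
      trace_smul, trace_conjTranspose_mul_self_mul_unitary _ hU, horth j j, if_pos rfl, if_pos rfl,
      smul_eq_mul, mul_one] at htr
    exact (pow_eq_one_iff_of_nonneg (norm_nonneg _) two_ne_zero).mp (by exact_mod_cast htr)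
  simpa [smul_smul, inv_mul_cancel₀ hs] using smul_mem_unitaryGroup hs_norm hU

end

/-- Let `{|Mᵢ⟩⟩}` be an orthonormal basis of `ℂ^d ⊗ ℂ^d` with each `Mᵢ` invertible and the
`Mᵢ` pairwise non-proportional. The triple-product closure condition
(for all `i,j,k` there is `l` with `Mᵢ Mⱼ⁻¹ M_k ∝ M_l`) holds if and only if for every `j`
the family `{Mⱼ⁻¹ Mᵢ}ᵢ` is a nice error basis. -/
theorem triple_product_closure_iff_nice {d : ℕ} (hd : 0 < d)
    (M : Fin (d ^ 2) → Matrix (Fin d) (Fin d) ℂ)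
    (hinv : ∀ i, IsUnit (M i))
    (horth : ∀ i j, ((M i)ᴴ * M j).trace = if i = j then 1 else 0)
    (hnp : ∀ i j, (∃ α : ℂ, M i = α • M j) → i = j) :
    (∀ i j k, ∃ (l : Fin (d ^ 2)) (α : ℂ), M i * (M j)⁻¹ * M k = α • M l) ↔
      (∀ j, IsNiceErrorBasis (fun i => (M j)⁻¹ * M i)) := by
  have : Nonempty (Fin d) := ⟨⟨0, hd⟩⟩
  refine ⟨fun hcl j => ?_, fun hnice i j k =>
    (projectivelyClosed_inv_mul_iff (hinv j)).mp (fun i k => ?_) i k⟩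
  · have hu := inv_mul_mem_unitaryGroup (by simp) hinv horth hnp hcl j
    refine ⟨⟨fun i => mem_unitaryGroup_iff'.mp (hu i), ?_⟩, fun i k => ?_⟩
    · exact (linearIndependent_of_orthonormal horth).map' (LinearMap.mulLeft ℂ (M j)⁻¹)
        (LinearMap.ker_eq_bot.mpr (isUnit_nonsing_inv_iff.mpr (hinv j)).mul_right_injective)
    · obtain ⟨l, α, h⟩ := (projectivelyClosed_inv_mul_iff (hinv j)).mpr (hcl · j ·) i k
      exact ⟨α, l, norm_eq_one_of_mul_eq_smul (norm_det_of_mem_unitaryGroup (hu i))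
        (norm_det_of_mem_unitaryGroup (hu k)) (norm_det_of_mem_unitaryGroup (hu l)) h, h⟩
  · obtain ⟨c, l, -, h⟩ := (hnice j).2 i k
    exact ⟨l, c, h⟩
end
end

section
/- Let {Uᵢ}_{i=1,…,d²} be a nice unitary error basis with U₁ = I (after rescaling so each is unitary). Define Mᵢ = Uᵢ/√d. Then for every j, and all indices i,k, the product Mᵢ Mⱼ† M_k equals (1/d) times a unit-phase multiple of some M_l; in particular the rank-1 PVM {|Mᵢ⟩⟩⟨⟨Mᵢ|} on ℂ^d ⊗ ℂ^d is localized by the resource state |Mⱼᵀ⟩⟩⟨⟨Mⱼᵀ| with Alice's and Bob's local PVMs both equal to {|Mᵢ⟩⟩⟨⟨Mᵢ|} and a pattern function f(i,k) = l determined by Mᵢ Mⱼ⁻¹ M_k ∝ M_{f(i,k)}. -/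
/-!
Since `U i₀ = 1` and left multiplication by `U j` permutes the basis up to phases, `(U j)ᴴ` is a
phase times a basis element. Hence `U i (U j)ᴴ U k` is a product of three basis elements, that is
a phase times a single `U l`; rescaling by `(√d)⁻¹` three times leaves `d⁻¹` times `(√d)⁻¹ U l`.
-/

open Matrix

noncomputable section

namespace IsNiceErrorBasis

variable {d n : ℕ} {U : Fin n → Matrix (Fin d) (Fin d) ℂ}

/-- Left multiplication by `U j` is injective on indices by linear independence, hence surjective
because the index set is finite. -/
theorem exists_mul_eq_smul (hU : IsNiceErrorBasis U) (j k : Fin n) :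
    ∃ (c : ℂ) (a : Fin n), ‖c‖ = 1 ∧ U j * U a = c • U k := by
  obtain ⟨⟨hunit, hli⟩, hclose⟩ := hU
  choose c idx hc hmul using hclose j
  have hc0 : ∀ a, c a ≠ 0 := fun a => norm_ne_zero_iff.mp (by simp [hc])
  have hcancel : ∀ a, U a = c a • ((U j)ᴴ * U (idx a)) := fun a => by
    rw [← Matrix.mul_smul, ← hmul, ← Matrix.mul_assoc, hunit, Matrix.one_mul]
  have hinj : Function.Injective idx := fun a b hab =>
    hli.eq_of_smul_apply_eq_smul_apply (c b) (c a) a b (hc0 b) <| by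
      rw [hcancel a, hcancel b, hab, smul_comm]
  obtain ⟨a, rfl⟩ := Finite.injective_iff_surjective.mp hinj k
  exact ⟨c a, a, hc a, hmul a⟩

theorem exists_conjTranspose_eq_smul (hU : IsNiceErrorBasis U) {i₀ : Fin n} (h₀ : U i₀ = 1)
    (j : Fin n) : ∃ (c : ℂ) (a : Fin n), ‖c‖ = 1 ∧ (U j)ᴴ = c • U a := by
  obtain ⟨c, a, hc, h⟩ := hU.exists_mul_eq_smul j i₀
  have hc0 : c ≠ 0 := norm_ne_zero_iff.mp (by simp [hc])
  refine ⟨c⁻¹, a, by simp [hc], ?_⟩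
  calc (U j)ᴴ = (U j)ᴴ * (c⁻¹ • (U j * U a)) := by
        rw [h, h₀, smul_smul, inv_mul_cancel₀ hc0, one_smul, Matrix.mul_one]
    _ = c⁻¹ • U a := by rw [Matrix.mul_smul, ← Matrix.mul_assoc, hU.1.1 j, Matrix.one_mul]

theorem exists_mul_conjTranspose_mul_eq_smul (hU : IsNiceErrorBasis U) {i₀ : Fin n}
    (h₀ : U i₀ = 1) (i j k : Fin n) :
    ∃ (c : ℂ) (l : Fin n), ‖c‖ = 1 ∧ U i * (U j)ᴴ * U k = c • U l := by
  obtain ⟨c₀, a, hc₀, ha⟩ := hU.exists_conjTranspose_eq_smul h₀ j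
  obtain ⟨c₁, m, hc₁, hm⟩ := hU.2 i a
  obtain ⟨c₂, l, hc₂, hl⟩ := hU.2 m k
  refine ⟨c₀ * c₁ * c₂, l, by simp [hc₀, hc₁, hc₂], ?_⟩
  rw [ha, Matrix.mul_smul, hm, Matrix.smul_mul, Matrix.smul_mul, hl, smul_smul, smul_smul]

end IsNiceErrorBasis

theorem Matrix.inv_sqrt_smul_mul_conjTranspose_mul {m : Type*} [Fintype m] {x : ℝ} (hx : 0 ≤ x)
    {A B C D : Matrix m m ℂ} {c : ℂ} (h : A * Bᴴ * C = c • D) :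
    ((√x : ℂ)⁻¹ • A) * ((√x : ℂ)⁻¹ • B)ᴴ * ((√x : ℂ)⁻¹ • C) =
      ((x : ℂ)⁻¹ * c) • ((√x : ℂ)⁻¹ • D) := by
  have hsq : ((√x : ℂ)) ^ 2 = x := by rw [← Complex.ofReal_pow, Real.sq_sqrt hx]
  simp only [conjTranspose_smul, star_inv₀, Complex.star_def, Complex.conj_ofReal,
    Matrix.smul_mul, Matrix.mul_smul, smul_smul, h]
  rw [← hsq]
  congr 1
  ring

/-- For a nice unitary error basis `{Uᵢ}` with `U₁ = I` and `Mᵢ := Uᵢ/√d`: for every `j` and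
all `i, k`, the product `Mᵢ Mⱼ† M_k` equals `(1/d)` times a unit-phase multiple of some
`M_l`; in particular the rank-1 PVM `{|Mᵢ⟩⟩⟨⟨Mᵢ|}` on `ℂ^d ⊗ ℂ^d` is localized by the
resource state `|Mⱼᵀ⟩⟩⟨⟨Mⱼᵀ|` with Alice's and Bob's local PVMs both `{|Mᵢ⟩⟩⟨⟨Mᵢ|}`
and a pattern function `f` determined by `Mᵢ (Mⱼᵀ)* M_k = Mᵢ Mⱼ† M_k ∝ M_{f(i,k)}`. -/
theorem nice_basis_gives_localization {d : ℕ} (hd : 0 < d)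
    (U : Fin (d ^ 2) → Matrix (Fin d) (Fin d) ℂ)
    (hnice : IsNiceErrorBasis U)
    (hU1 : U ⟨0, by positivity⟩ = 1)
    (M : Fin (d ^ 2) → Matrix (Fin d) (Fin d) ℂ)
    (hM : M = fun i => ((Real.sqrt d : ℂ))⁻¹ • U i)
    (j : Fin (d ^ 2)) :
    (∀ i k, ∃ (c : ℂ) (l : Fin (d ^ 2)), ‖c‖ = 1 ∧
        M i * (M j)ᴴ * M k = (((d : ℂ))⁻¹ * c) • M l) ∧
    ∃ f : Fin (d ^ 2) → Fin (d ^ 2) → Fin (d ^ 2),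
      ∀ i k, ∃ α : ℂ, M i * ((M j)ᵀ).map star * M k = α • M (f i k) := by
  have hscaled : ∀ i k, ∃ (c : ℂ) (l : Fin (d ^ 2)), ‖c‖ = 1 ∧
      M i * (M j)ᴴ * M k = (((d : ℂ))⁻¹ * c) • M l := by
    intro i k
    obtain ⟨c, l, hc, h⟩ := hnice.exists_mul_conjTranspose_mul_eq_smul hU1 i j k
    refine ⟨c, l, hc, ?_⟩
    subst hM
    simpa using Matrix.inv_sqrt_smul_mul_conjTranspose_mul (Nat.cast_nonneg d) h
  refine ⟨hscaled, ?_⟩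
  choose _ l _ h using hscaled
  exact ⟨l, fun i k => ⟨_, h i k⟩⟩
end
end

section
/- Let R be an entangled pure state on ℂ^d ⊗ ℂ^d represented by a d×d matrix R (double-ket form), and suppose rank-1 families {A_a}_{a∈X}, {B_b}_{b∈Y} of d×d matrices form POVMs (Σ_a |A_a⟩⟩⟨⟨A_a| = I, Σ_b |B_b⟩⟩⟨⟨B_b| = I), are pairwise non-proportional, and satisfy A_a R* B_b ∝ M_{f(a,b)} for a rank-1 non-redundant PVM {|Mᵢ⟩⟩⟨⟨Mᵢ|}_{i=1,…,d²} on ℂ^d ⊗ ℂ^d containing at least one full-rank element M₁. Then: |X| = |Y| = d², all Mᵢ, A_a, B_b are invertible, and the pattern function f : X × Y → [d²] is a Latin square (injective in each argument). -/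
/-!
Write `⟨C, D⟩ = tr (Cᴴ D)`. A rank-1 POVM `{|V_a⟩⟩⟨⟨V_a|}` is a Parseval frame of matrices,
`∑ a, ⟨V_a, C⟩ V_a = C`, so it has at least `d²` elements. Parseval for `B` and the identity
`∑ a, A_a Z A_aᴴ = tr Z • 1` give `∑ a b, |⟨M₁, A_a R* B_b⟩|² = 1`, so some `A_a₀ R* B_b₀` is a
nonzero multiple of the full-rank `M₁`, and `A_a₀`, `R*`, `B_b₀` are invertible. Cancelling
invertible factors, non-redundancy makes `a ↦ f a b₀` and `b ↦ f a₀ b` injective, hence bijective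
by counting. For every `b`, right multiplication by `G = B_b₀⁻¹ B_b` then sends each `Mᵢ` to a
multiple of some `M_k`; expanding `M₁ Gᴴ` in the orthonormal basis `{Mᵢ}` shows that `Gᴴ G` is a
nonzero scalar, so `G`, hence `B_b`, every `Mᵢ` and every `A_a` are invertible, and cancellation
gives the Latin square.
-/

open Matrix

noncomputable section

/-- The rank-1 operator `|M⟩⟩⟨⟨M|` on `ℂ^d ⊗ ℂ^d` associated with a `d×d` matrix `M`,
where `|M⟩⟩ = (I ⊗ M) Σᵢ |i⟩⊗|i⟩` has coefficient `M s t` at the product-basis index `(s,t)`. -/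
def dop {d : ℕ} (M : Matrix (Fin d) (Fin d) ℂ) :
    Matrix (Fin d × Fin d) (Fin d × Fin d) ℂ :=
  Matrix.of fun p q => M p.1 p.2 * star (M q.1 q.2)

open scoped ComplexOrder

theorem isUnit_of_isUnit_smul {K A : Type*} [Field K] [Ring A] [Algebra K A] {c : K} {N : A}
    (h : IsUnit (c • N)) : IsUnit N := by
  rcases eq_or_ne c 0 with rfl | hc
  · rw [zero_smul, isUnit_zero_iff] at h
    have := subsingleton_of_zero_eq_one h
    exact isUnit_of_subsingleton N
  · exact (isUnit_smul_iff (Units.mk0 c hc) N).mp h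

theorem isUnit_of_mul_eq_smul {K R : Type*} [Field K] [Ring R] [Algebra K R] {a u n : R} {α : K}
    (ha : a ≠ 0) (hu : IsUnit u) (hn : IsUnit n) (h : a * u = α • n) : IsUnit a := by
  have hα : α ≠ 0 := by
    rintro rfl
    rw [zero_smul, ← zero_mul u] at h
    exact ha (hu.mul_left_injective h)
  rw [← hu.mul_right_iff, h]
  exact (isUnit_smul_iff (Units.mk0 α hα) n).mpr hn

section LinearMap

variable {K V W ι κ : Type*} [DivisionRing K] [AddCommGroup V] [Module K V] [AddCommGroup W]
  [Module K W] {φ : V →ₗ[K] W}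

theorem ne_zero_of_map_eq_smul (hφ : Function.Injective φ) {v : V} {w : W} {α : K} (hv : v ≠ 0)
    (h : φ v = α • w) : α ≠ 0 := by
  rintro rfl
  exact hv (hφ (by rw [h, zero_smul, map_zero]))

theorem injective_of_map_eq_smul (hφ : Function.Injective φ) {v : ι → V} {w : κ → W}
    {g : ι → κ} (hv : ∀ i, v i ≠ 0) (hnr : ∀ i j, (∃ α : K, v i = α • v j) → i = j)
    (h : ∀ i, ∃ α : K, φ (v i) = α • w (g i)) : Function.Injective g := by
  intro i j hij
  obtain ⟨α, hα⟩ := h i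
  obtain ⟨β, hβ⟩ := h j
  refine hnr i j ⟨α / β, hφ ?_⟩
  rw [map_smul, hα, hβ, hij, smul_smul, div_mul_cancel₀ _ (ne_zero_of_map_eq_smul hφ (hv j) hβ)]

end LinearMap

section Frame

variable {d : ℕ} {ι : Type*} [Fintype ι] {V : ι → Matrix (Fin d) (Fin d) ℂ}

theorem sum_mul_star_of_sum_dop_eq_one (hV : ∑ a, dop (V a) = 1) (s t s' t' : Fin d) :
    ∑ a, V a s t * star (V a s' t') = if s = s' ∧ t = t' then 1 else 0 := by
  simpa [dop, Matrix.sum_apply, Matrix.one_apply] using congrFun₂ hV (s, t) (s', t')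

theorem sum_trace_smul_of_sum_dop_eq_one (hV : ∑ a, dop (V a) = 1)
    (C : Matrix (Fin d) (Fin d) ℂ) : ∑ a, ((V a)ᴴ * C).trace • V a = C := by
  ext i j
  have hij : ∀ s t, ∑ a, star (V a s t) * C s t * V a i j =
      if s = i ∧ t = j then C s t else 0 := by
    intro s t
    simp_rw [mul_right_comm _ (C s t), ← Finset.sum_mul, mul_comm (star _),
      sum_mul_star_of_sum_dop_eq_one hV, eq_comm (a := i), eq_comm (a := j)]
    simp
  simp only [Matrix.sum_apply, Matrix.smul_apply, Matrix.trace, Matrix.diag_apply,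
    Matrix.mul_apply, Matrix.conjTranspose_apply, smul_eq_mul, Finset.sum_mul]
  rw [Finset.sum_comm]
  simp_rw [Finset.sum_comm (γ := ι), hij]
  simp [ite_and]

theorem sum_mul_mul_conjTranspose_of_sum_dop_eq_one (hV : ∑ a, dop (V a) = 1)
    (Y : Matrix (Fin d) (Fin d) ℂ) : ∑ a, V a * Y * (V a)ᴴ = Y.trace • 1 := by
  ext s s'
  have hss' : ∀ t t', ∑ a, V a s t * Y t t' * star (V a s' t') =
      if s = s' ∧ t = t' then Y t t' else 0 := by
    intro t t'
    simp_rw [mul_right_comm _ (Y t t'), ← Finset.sum_mul, sum_mul_star_of_sum_dop_eq_one hV]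
    simp
  simp only [Matrix.sum_apply, Matrix.mul_apply, Matrix.conjTranspose_apply, Finset.sum_mul]
  rw [Finset.sum_comm]
  simp_rw [Finset.sum_comm (γ := ι), hss']
  by_cases h : s = s' <;> simp [h, Matrix.trace]

theorem sum_trace_mul_trace_of_sum_dop_eq_one (hV : ∑ a, dop (V a) = 1)
    (C D : Matrix (Fin d) (Fin d) ℂ) :
    ∑ a, (Cᴴ * V a).trace * ((V a)ᴴ * D).trace = (Cᴴ * D).trace := by
  conv_rhs => rw [← sum_trace_smul_of_sum_dop_eq_one hV D]
  simp [Matrix.mul_sum, Matrix.trace_sum, mul_comm]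

theorem sq_le_card_of_sum_dop_eq_one (hV : ∑ a, dop (V a) = 1) : d ^ 2 ≤ Fintype.card ι := by
  have hspan : Submodule.span ℂ (Set.range V) = ⊤ :=
    Submodule.eq_top_iff'.mpr fun C => sum_trace_smul_of_sum_dop_eq_one hV C ▸
      Submodule.sum_mem _ fun a _ => Submodule.smul_mem _ _ (Submodule.subset_span ⟨a, rfl⟩)
  have := finrank_range_le_card (R := ℂ) V
  rwa [Set.finrank, hspan, finrank_top, Module.finrank_matrix, Module.finrank_self, mul_one,
    Fintype.card_fin, ← sq] at this

theorem bijective_of_injective_of_sum_dop_eq_one (hV : ∑ a, dop (V a) = 1) {g : ι → Fin (d ^ 2)}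
    (hg : Function.Injective g) : Function.Bijective g := by
  refine (Fintype.bijective_iff_injective_and_card g).mpr ⟨hg, le_antisymm ?_ ?_⟩
  · simpa using Fintype.card_le_of_injective g hg
  · simpa using sq_le_card_of_sum_dop_eq_one hV

theorem trace_conjTranspose_mul_eq_sum (C D : Matrix (Fin d) (Fin d) ℂ) :
    (Cᴴ * D).trace = ∑ p : Fin d × Fin d, star (C p.1 p.2) * D p.1 p.2 := by
  rw [Matrix.trace, Fintype.sum_prod_type, Finset.sum_comm]
  simp [Matrix.mul_apply]

theorem sum_dop_eq_one_of_orthonormal {M : Fin (d ^ 2) → Matrix (Fin d) (Fin d) ℂ}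
    (horth : ∀ i j, ((M i)ᴴ * M j).trace = if i = j then 1 else 0) : ∑ i, dop (M i) = 1 := by
  let e : Fin d × Fin d ≃ Fin (d ^ 2) := finProdFinEquiv.trans (finCongr (sq d).symm)
  let U : Matrix (Fin d × Fin d) (Fin d × Fin d) ℂ := Matrix.of fun p q => M (e q) p.1 p.2
  have hU : Uᴴ * U = 1 := by
    ext q q'
    simpa [U, Matrix.mul_apply, Matrix.one_apply, trace_conjTranspose_mul_eq_sum] using
      horth (e q) (e q')
  ext p p'
  have : (U * Uᴴ) p p' = (1 : Matrix _ _ ℂ) p p' := by rw [mul_eq_one_comm.mp hU]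
  rw [Matrix.mul_apply, ← Equiv.sum_comp e.symm] at this
  simpa [U, dop, Matrix.sum_apply, Matrix.one_apply] using this

end Frame

section Localization

variable {d : ℕ} {X Y : Type*} [Fintype X] [Fintype Y]
  {A : X → Matrix (Fin d) (Fin d) ℂ} {B : Y → Matrix (Fin d) (Fin d) ℂ}

theorem sum_sum_trace_mul_star_of_sum_dop_eq_one (hA : ∑ a, dop (A a) = 1)
    (hB : ∑ b, dop (B b) = 1) (C S : Matrix (Fin d) (Fin d) ℂ) :
    ∑ a, ∑ b, (Cᴴ * (A a * S * B b)).trace * star (Cᴴ * (A a * S * B b)).trace =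
      (S * Sᴴ).trace * (Cᴴ * C).trace := by
  have hinner : ∀ a, ∑ b, (Cᴴ * (A a * S * B b)).trace * star (Cᴴ * (A a * S * B b)).trace =
      (Cᴴ * (A a * (S * Sᴴ) * (A a)ᴴ) * C).trace := by
    intro a
    set D := Sᴴ * (A a)ᴴ * C
    have hD : ∀ b, Cᴴ * (A a * S * B b) = Dᴴ * B b := fun b => by
      simp [D, Matrix.conjTranspose_mul, Matrix.mul_assoc]
    simp_rw [hD, ← Matrix.trace_conjTranspose, Matrix.conjTranspose_mul,
      Matrix.conjTranspose_conjTranspose, sum_trace_mul_trace_of_sum_dop_eq_one hB]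
    simp [D, Matrix.conjTranspose_mul, Matrix.mul_assoc]
  simp_rw [hinner, ← Matrix.trace_sum, ← Finset.sum_mul, ← Finset.mul_sum,
    sum_mul_mul_conjTranspose_of_sum_dop_eq_one hA, Matrix.mul_smul, Matrix.smul_mul,
    Matrix.mul_one, Matrix.trace_smul, smul_eq_mul]

theorem exists_trace_mul_ne_zero_of_sum_dop_eq_one (hA : ∑ a, dop (A a) = 1)
    (hB : ∑ b, dop (B b) = 1) {C S : Matrix (Fin d) (Fin d) ℂ} (hC : C ≠ 0) (hS : S ≠ 0) :
    ∃ a b, (Cᴴ * (A a * S * B b)).trace ≠ 0 := by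
  by_contra! h
  have := sum_sum_trace_mul_star_of_sum_dop_eq_one hA hB C S
  simp only [h, zero_mul, Finset.sum_const_zero] at this
  exact mul_ne_zero (trace_mul_conjTranspose_self_eq_zero_iff.not.mpr hS)
    (trace_conjTranspose_mul_self_eq_zero_iff.not.mpr hC) this.symm

end Localization

section Orthonormal

variable {d : ℕ} {M : Fin (d ^ 2) → Matrix (Fin d) (Fin d) ℂ}

theorem isUnit_of_trace_conjTranspose_mul_ne_zero
    (horth : ∀ i j, ((M i)ᴴ * M j).trace = if i = j then 1 else 0) {i j : Fin (d ^ 2)}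
    (hMi : IsUnit (M i)) {P : Matrix (Fin d) (Fin d) ℂ} {α : ℂ} (hP : P = α • M j)
    (h : ((M i)ᴴ * P).trace ≠ 0) : IsUnit P := by
  rw [hP, Matrix.mul_smul, Matrix.trace_smul, horth] at h
  split_ifs at h with hij
  · subst hij
    rw [hP]
    exact (isUnit_smul_iff (Units.mk0 α (by simpa using h)) _).mpr hMi
  · simp at h

theorem exists_isUnit_mul_mul_of_sum_dop_eq_one
    (horth : ∀ i j, ((M i)ᴴ * M j).trace = if i = j then 1 else 0) {i₀ : Fin (d ^ 2)}
    (hM₀ : IsUnit (M i₀)) {X Y : Type*} [Fintype X] [Fintype Y] {A : X → Matrix (Fin d) (Fin d) ℂ}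
    {B : Y → Matrix (Fin d) (Fin d) ℂ} (hA : ∑ a, dop (A a) = 1) (hB : ∑ b, dop (B b) = 1)
    {S : Matrix (Fin d) (Fin d) ℂ} (hS : S ≠ 0) {f : X → Y → Fin (d ^ 2)}
    (hloc : ∀ a b, ∃ α : ℂ, A a * S * B b = α • M (f a b)) : ∃ a b, IsUnit (A a * S * B b) := by
  have hM₀ne : M i₀ ≠ 0 := fun h => by simpa [h] using horth i₀ i₀
  obtain ⟨a, b, h⟩ := exists_trace_mul_ne_zero_of_sum_dop_eq_one hA hB hM₀ne hS
  obtain ⟨α, hα⟩ := hloc a b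
  exact ⟨a, b, isUnit_of_trace_conjTranspose_mul_ne_zero horth hM₀ hα h⟩

theorem isUnit_of_forall_mul_eq_smul
    (horth : ∀ i j, ((M i)ᴴ * M j).trace = if i = j then 1 else 0) {i₁ : Fin (d ^ 2)}
    (hM₁ : IsUnit (M i₁)) {G : Matrix (Fin d) (Fin d) ℂ} (hG : G ≠ 0)
    (hMG : ∀ i, ∃ k, ∃ c : ℂ, M i * G = c • M k) : IsUnit G := by
  choose k c hkc using hMG
  have hcoef : ∀ l, ((M l)ᴴ * (M i₁ * Gᴴ)).trace = if k l = i₁ then star (c l) else 0 := by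
    intro l
    rw [← Matrix.mul_assoc, Matrix.trace_mul_cycle, ← Matrix.conjTranspose_mul, hkc,
      Matrix.conjTranspose_smul, Matrix.smul_mul, Matrix.trace_smul, horth]
    simp
  set s := ∑ l, if k l = i₁ then star (c l) * c l else 0
  have hGG : M i₁ * (Gᴴ * G) = M i₁ * (s • 1) := by
    calc M i₁ * (Gᴴ * G)
        = ∑ l, ((M l)ᴴ * (M i₁ * Gᴴ)).trace • (M l * G) := by
          conv_lhs => rw [← Matrix.mul_assoc, ← sum_trace_smul_of_sum_dop_eq_one
            (sum_dop_eq_one_of_orthonormal horth) (M i₁ * Gᴴ)]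
          simp [Finset.sum_mul]
      _ = ∑ l, (if k l = i₁ then star (c l) * c l else 0) • M i₁ := by
          refine Finset.sum_congr rfl fun l _ => ?_
          rw [hcoef, hkc]
          split_ifs with hl
          · rw [hl, smul_smul]
          · simp
      _ = M i₁ * (s • 1) := by rw [← Finset.sum_smul, Matrix.mul_smul, Matrix.mul_one]
  replace hGG := hM₁.mul_left_cancel hGG
  have hs : s ≠ 0 := by
    intro hs
    rw [hs, zero_smul, Matrix.conjTranspose_mul_self_eq_zero] at hGG
    exact hG hGG
  refine IsUnit.of_mul_eq_one_right (s⁻¹ • Gᴴ) ?_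
  rw [Matrix.smul_mul, hGG, smul_smul, inv_mul_cancel₀ hs, one_smul]

theorem isUnit_of_mul_eq_smul_of_surjective
    (horth : ∀ i j, ((M i)ᴴ * M j).trace = if i = j then 1 else 0) {i₁ : Fin (d ^ 2)}
    (hM₁ : IsUnit (M i₁)) {X : Type*} {A : X → Matrix (Fin d) (Fin d) ℂ} (hA : ∀ a, A a ≠ 0)
    {B₀ B₁ : Matrix (Fin d) (Fin d) ℂ} (hB₀ : IsUnit B₀) (hB₁ : B₁ ≠ 0) {g₀ g₁ : X → Fin (d ^ 2)}
    (hg₀ : Function.Surjective g₀) (h₀ : ∀ a, ∃ α : ℂ, A a * B₀ = α • M (g₀ a))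
    (h₁ : ∀ a, ∃ β : ℂ, A a * B₁ = β • M (g₁ a)) : IsUnit B₁ := by
  obtain ⟨u, rfl⟩ := hB₀
  set G := u.inv * B₁
  have huG : (u : Matrix (Fin d) (Fin d) ℂ) * G = B₁ := u.mul_inv_cancel_left B₁
  have hG : G ≠ 0 := by
    rintro hG
    rw [hG, mul_zero] at huG
    exact hB₁ huG.symm
  have hMG : ∀ i, ∃ k, ∃ c : ℂ, M i * G = c • M k := by
    intro i
    obtain ⟨a, rfl⟩ := hg₀ i
    obtain ⟨α, hα⟩ := h₀ a
    obtain ⟨β, hβ⟩ := h₁ a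
    have hα0 : α ≠ 0 := ne_zero_of_map_eq_smul (φ := LinearMap.mulRight ℂ (u : Matrix _ _ ℂ))
      u.isUnit.mul_left_injective (hA a) hα
    refine ⟨g₁ a, α⁻¹ * β, ?_⟩
    calc M (g₀ a) * G = α⁻¹ • (A a * u * G) := by
          rw [hα, Matrix.smul_mul, smul_smul, inv_mul_cancel₀ hα0, one_smul]
      _ = (α⁻¹ * β) • M (g₁ a) := by rw [Matrix.mul_assoc, huG, hβ, smul_smul]
  exact huG ▸ u.isUnit.mul (isUnit_of_forall_mul_eq_smul horth hM₁ hG hMG)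

end Orthonormal

theorem localization_fullrank_latin_general {d : ℕ}
    {X Y : Type} [Fintype X] [Fintype Y]
    (M : Fin (d ^ 2) → Matrix (Fin d) (Fin d) ℂ)
    (A : X → Matrix (Fin d) (Fin d) ℂ) (B : Y → Matrix (Fin d) (Fin d) ℂ)
    (R : Matrix (Fin d) (Fin d) ℂ)
    (f : X → Y → Fin (d ^ 2))
    -- `{|Mᵢ⟩⟩⟨⟨Mᵢ|}` is a rank-1 PVM: the double-kets are orthonormal
    (horthM : ∀ i j, ((M i)ᴴ * M j).trace = if i = j then 1 else 0)
    -- at least one element of the PVM is full-rank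
    (hfull : ∃ i, IsUnit (M i))
    -- `R` is an entangled pure state (unit norm, Schmidt rank at least 2)
    (hR : (Rᴴ * R).trace = 1)
    -- `{|A_a⟩⟩⟨⟨A_a|}` and `{|B_b⟩⟩⟨⟨B_b|}` are rank-1 non-redundant POVMs
    (hA : ∑ a, dop (A a) = 1) (hB : ∑ b, dop (B b) = 1)
    (hA1 : ∀ a, A a ≠ 0) (hB1 : ∀ b, B b ≠ 0)
    (hAnr : ∀ a a', (∃ α : ℂ, A a = α • A a') → a = a')
    (hBnr : ∀ b b', (∃ α : ℂ, B b = α • B b') → b = b')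
    -- the localization condition `A_a R* B_b ∝ M_{f(a,b)}`
    (hloc : ∀ a b, ∃ α : ℂ, A a * R.map star * B b = α • M (f a b)) :
    Fintype.card X = d ^ 2 ∧ Fintype.card Y = d ^ 2 ∧
    (∀ i, IsUnit (M i)) ∧ (∀ a, IsUnit (A a)) ∧ (∀ b, IsUnit (B b)) ∧
    (∀ a, Function.Injective (f a)) ∧ (∀ b, Function.Injective fun a => f a b) := by
  obtain ⟨i₀, hM₀⟩ := hfull
  set S := R.map star
  have hS : S ≠ 0 := fun hS => by
    have : R = 0 := by ext i j; simpa [S] using congrFun₂ hS i j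
    simp [this] at hR
  have hloc_assoc : ∀ a b, ∃ α : ℂ, A a * (S * B b) = α • M (f a b) := by
    simpa only [Matrix.mul_assoc] using hloc
  obtain ⟨a₀, b₀, hP₀⟩ := exists_isUnit_mul_mul_of_sum_dop_eq_one horthM hM₀ hA hB hS hloc
  obtain ⟨⟨hA₀, hSu⟩, hB₀⟩ := (IsUnit.mul_iff.mp hP₀).imp_left IsUnit.mul_iff.mp
  have hrow : ∀ a, IsUnit (A a * S) → Function.Injective (f a) := fun a hU =>
    injective_of_map_eq_smul (φ := LinearMap.mulLeft ℂ (A a * S)) hU.mul_right_injective hB1 hBnr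
      (hloc a)
  have hcol : ∀ b, IsUnit (S * B b) → Function.Injective (f · b) := fun b hU =>
    injective_of_map_eq_smul (φ := LinearMap.mulRight ℂ (S * B b)) hU.mul_left_injective hA1 hAnr
      (hloc_assoc · b)
  have hσ := bijective_of_injective_of_sum_dop_eq_one hA (hcol b₀ (hSu.mul hB₀))
  have hτ := bijective_of_injective_of_sum_dop_eq_one hB (hrow a₀ (hA₀.mul hSu))
  have hBu : ∀ b, IsUnit (B b) := fun b =>
    hSu.mul_left_iff.mp <| isUnit_of_mul_eq_smul_of_surjective horthM hM₀ hA1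
      (hSu.mul hB₀) (fun h => hB1 b (hSu.mul_right_injective (h.trans (mul_zero S).symm)))
      hσ.2 (hloc_assoc · b₀) (hloc_assoc · b)
  have hMu : ∀ i, IsUnit (M i) := fun i => by
    obtain ⟨b, rfl⟩ := hτ.2 i
    obtain ⟨β, hβ⟩ := hloc a₀ b
    exact isUnit_of_isUnit_smul (hβ ▸ (hA₀.mul hSu).mul (hBu b))
  have hAu : ∀ a, IsUnit (A a) := fun a => by
    obtain ⟨α, hα⟩ := hloc_assoc a b₀
    exact isUnit_of_mul_eq_smul (hA1 a) (hSu.mul hB₀) (hMu _) hα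
  exact ⟨by simpa using Fintype.card_of_bijective hσ, by simpa using Fintype.card_of_bijective hτ,
    hMu, hAu, hBu, fun a => hrow a ((hAu a).mul hSu), fun b => hcol b (hSu.mul (hBu b))⟩

/-- For a rank-1 non-redundant localization `(R, {A_a}, {B_b}, f)` of a rank-1 non-redundant
PVM `{|Mᵢ⟩⟩⟨⟨Mᵢ|}` on `ℂ^d ⊗ ℂ^d` containing a full-rank element, with an entangled pure
resource state `R`: the local POVMs must be PVMs (`|X| = |Y| = d²`), all `Mᵢ`, `A_a`, `B_b`
must be full-rank, and the pattern function `f` forms a Latin square. -/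
theorem localization_fullrank_latin {d : ℕ} (hd : 0 < d)
    {X Y : Type} [Fintype X] [Fintype Y]
    (M : Fin (d ^ 2) → Matrix (Fin d) (Fin d) ℂ)
    (A : X → Matrix (Fin d) (Fin d) ℂ) (B : Y → Matrix (Fin d) (Fin d) ℂ)
    (R : Matrix (Fin d) (Fin d) ℂ)
    (f : X → Y → Fin (d ^ 2))
    -- `{|Mᵢ⟩⟩⟨⟨Mᵢ|}` is a rank-1 PVM: the double-kets are orthonormal
    (horthM : ∀ i j, ((M i)ᴴ * M j).trace = if i = j then 1 else 0)
    -- at least one element of the PVM is full-rank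
    (hfull : ∃ i, IsUnit (M i))
    -- `R` is an entangled pure state (unit norm, Schmidt rank at least 2)
    (hR : (Rᴴ * R).trace = 1) (hRent : 1 < R.rank)
    -- `{|A_a⟩⟩⟨⟨A_a|}` and `{|B_b⟩⟩⟨⟨B_b|}` are rank-1 non-redundant POVMs
    (hA : ∑ a, dop (A a) = 1) (hB : ∑ b, dop (B b) = 1)
    (hA1 : ∀ a, A a ≠ 0) (hB1 : ∀ b, B b ≠ 0)
    (hAnr : ∀ a a', (∃ α : ℂ, A a = α • A a') → a = a')
    (hBnr : ∀ b b', (∃ α : ℂ, B b = α • B b') → b = b')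
    -- the localization condition `A_a R* B_b ∝ M_{f(a,b)}`
    (hloc : ∀ a b, ∃ α : ℂ, A a * R.map star * B b = α • M (f a b)) :
    Fintype.card X = d ^ 2 ∧ Fintype.card Y = d ^ 2 ∧
    (∀ i, IsUnit (M i)) ∧ (∀ a, IsUnit (A a)) ∧ (∀ b, IsUnit (B b)) ∧
    (∀ a, Function.Injective (f a)) ∧ (∀ b, Function.Injective fun a => f a b) :=
  localization_fullrank_latin_general M A B R f horthM hfull hR hA hB hA1 hB1 hAnr hBnr hloc
end
end

section
/- A rank-1 PVM {|Mᵢ⟩⟩⟨⟨Mᵢ|}_{i=1,…,d²} on ℂ^d ⊗ ℂ^d whose element M₁ is invertible can be localized by some pure resource state on ℂ^d ⊗ ℂ^d if and only if for all i,j,k ∈ [d²] there exists l ∈ [d²] with Mᵢ Mⱼ⁻¹ M_k ∝ M_l. -/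
open Matrix

noncomputable section

lemma recon {d n : ℕ} (A : Fin n → Matrix (Fin d) (Fin d) ℂ)
    (hA : (∑ a, dop (A a)) = 1) (C : Matrix (Fin d) (Fin d) ℂ) :
    (∑ a, ((A a)ᴴ * C).trace • A a) = C := by
  have key : ∀ p₁ p₂ q₁ q₂ : Fin d,
      (∑ a, A a p₁ p₂ * star (A a q₁ q₂)) =
        if p₁ = q₁ ∧ p₂ = q₂ then (1:ℂ) else 0 := by
    intro p₁ p₂ q₁ q₂
    have h : (∑ a, dop (A a)) (p₁,p₂) (q₁,q₂) = (1 : Matrix (Fin d × Fin d) (Fin d × Fin d) ℂ) (p₁,p₂) (q₁,q₂) := by rw [hA]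
    rw [Matrix.sum_apply] at h
    simpa [dop, Matrix.one_apply, Prod.ext_iff] using h
  ext p₁ p₂
  rw [Matrix.sum_apply]
  have tr_expand : ∀ a, ((A a)ᴴ * C).trace = ∑ x, ∑ y, star (A a y x) * C y x := by
    intro a
    simp [Matrix.trace, Matrix.diag, Matrix.mul_apply, Matrix.conjTranspose_apply]
  calc (∑ a, (((A a)ᴴ * C).trace • A a) p₁ p₂)
      = ∑ a, ∑ x, ∑ y, (star (A a y x) * C y x) * A a p₁ p₂ := by
        simp only [Matrix.smul_apply, smul_eq_mul, tr_expand, Finset.sum_mul]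
    _ = ∑ x, ∑ a, ∑ y, (star (A a y x) * C y x) * A a p₁ p₂ := Finset.sum_comm
    _ = ∑ x, ∑ y, ∑ a, (star (A a y x) * C y x) * A a p₁ p₂ := by
        exact Finset.sum_congr rfl fun x _ => Finset.sum_comm
    _ = ∑ x, ∑ y, (∑ a, A a p₁ p₂ * star (A a y x)) * C y x := by
        refine Finset.sum_congr rfl fun x _ => Finset.sum_congr rfl fun y _ => ?_
        rw [Finset.sum_mul]
        exact Finset.sum_congr rfl fun a _ => by ring
    _ = ∑ x, ∑ y, (if p₁ = y ∧ p₂ = x then (1:ℂ) else 0) * C y x := by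
        simp_rw [key]
    _ = C p₁ p₂ := by simp [ite_and, Finset.sum_ite_eq]

lemma vanish {d n : ℕ} (A : Fin n → Matrix (Fin d) (Fin d) ℂ)
    (hA : (∑ a, dop (A a)) = 1) (Y : Matrix (Fin d) (Fin d) ℂ)
    (h : ∀ a, (Y * A a).trace = 0) (C : Matrix (Fin d) (Fin d) ℂ) :
    (Y * C).trace = 0 := by
  conv_lhs => rw [← recon A hA C]
  rw [Matrix.mul_sum, Matrix.trace_sum]
  simp [Matrix.mul_smul, h]

lemma cyc4 {d : ℕ} (X Y Z W : Matrix (Fin d) (Fin d) ℂ) :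
    (X * (Y * Z * W)).trace = ((Z * W * X) * Y).trace := by
  rw [show X * (Y * Z * W) = (X * Y) * (Z * W) by simp only [Matrix.mul_assoc],
    Matrix.trace_mul_comm,
    show (Z * W) * (X * Y) = (Z * W * X) * Y by simp only [Matrix.mul_assoc]]

lemma trace_conj_single {d : ℕ} (N T : Matrix (Fin d) (Fin d) ℂ) (p q s t : Fin d) :
    (Nᴴ * (Matrix.single p s 1 * T * Matrix.single t q 1)).trace
      = star (N p q) * T s t := by
  simp [Matrix.trace, Matrix.diag, Matrix.mul_apply, Matrix.single,
    Matrix.conjTranspose_apply, Finset.sum_mul, Finset.mul_sum, ite_mul, mul_ite,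
    Finset.sum_ite_eq, Finset.sum_ite_eq', ite_and]

lemma complete {d : ℕ} (M : Fin (d^2) → Matrix (Fin d) (Fin d) ℂ)
    (h : ∀ i j, ((M i)ᴴ * M j).trace = if i = j then 1 else 0) :
    (∑ i, dop (M i)) = 1 := by
  classical
  have e : Fin d × Fin d ≃ Fin (d^2) := finProdFinEquiv.trans (finCongr (by ring))
  set S : Matrix (Fin d × Fin d) (Fin d × Fin d) ℂ :=
    Matrix.of (fun p q => M (e p) q.1 q.2) with hSdef
  have trace_expand : ∀ i j, ((M i)ᴴ * M j).trace = ∑ x, ∑ y, star (M i y x) * M j y x := by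
    intro i j
    simp [Matrix.trace, Matrix.diag, Matrix.mul_apply, Matrix.conjTranspose_apply]
  have inner : ∀ i j, (∑ r : Fin d × Fin d, star (M i r.1 r.2) * M j r.1 r.2)
      = if i = j then (1:ℂ) else 0 := by
    intro i j
    rw [← h i j, trace_expand, Finset.sum_comm, Fintype.sum_prod_type]
  have hS : S * Sᴴ = 1 := by
    ext p q
    rw [Matrix.mul_apply, Matrix.one_apply]
    simp only [hSdef, Matrix.conjTranspose_apply, Matrix.of_apply]
    rw [show (∑ r : Fin d × Fin d, M (e p) r.1 r.2 * star (M (e q) r.1 r.2))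
        = ∑ r : Fin d × Fin d, star (M (e q) r.1 r.2) * M (e p) r.1 r.2 from
      Finset.sum_congr rfl fun r _ => by ring, inner (e q) (e p)]
    simp [e.injective.eq_iff, eq_comm]
  have hS' : Sᴴ * S = 1 := mul_eq_one_comm.mp hS
  ext p q
  rw [Matrix.sum_apply]
  have h2 : (Sᴴ * S) q p = (1 : Matrix (Fin d × Fin d) (Fin d × Fin d) ℂ) q p := by rw [hS']
  rw [Matrix.mul_apply] at h2
  simp only [hSdef, Matrix.conjTranspose_apply, Matrix.of_apply] at h2
  rw [show (∑ r : Fin d × Fin d, star (M (e r) q.1 q.2) * M (e r) p.1 p.2)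
      = ∑ r : Fin d × Fin d, M (e r) p.1 p.2 * star (M (e r) q.1 q.2) from
    Finset.sum_congr rfl fun r _ => by ring] at h2
  rw [Equiv.sum_comp e (fun i => M i p.1 p.2 * star (M i q.1 q.2))] at h2
  simp only [dop, Matrix.of_apply]
  rw [h2, Matrix.one_apply, Matrix.one_apply]
  simp [eq_comm]

/-- A rank-1 PVM `{|Mᵢ⟩⟩⟨⟨Mᵢ|}` on `ℂ^d ⊗ ℂ^d` whose element `M₁` is invertible can be
localized by some pure resource state on `ℂ^d ⊗ ℂ^d` (i.e. there exist rank-1 non-redundant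
POVMs `{|A_a⟩⟩⟨⟨A_a|}`, `{|B_b⟩⟩⟨⟨B_b|}`, a unit-norm resource `R`, and a pattern function
`f` with `A_a R* B_b ∝ M_{f(a,b)}`) if and only if for all `i,j,k` there is `l` with
`Mᵢ Mⱼ⁻¹ M_k ∝ M_l`. -/
theorem localizable_iff_triple_product_closure {d : ℕ} (hd : 0 < d)
    (M : Fin (d ^ 2) → Matrix (Fin d) (Fin d) ℂ)
    (horthM : ∀ i j, ((M i)ᴴ * M j).trace = if i = j then 1 else 0)
    (hM1 : IsUnit (M ⟨0, by positivity⟩)) :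
    (∃ (nx ny : ℕ) (A : Fin nx → Matrix (Fin d) (Fin d) ℂ)
        (B : Fin ny → Matrix (Fin d) (Fin d) ℂ)
        (R : Matrix (Fin d) (Fin d) ℂ)
        (f : Fin nx → Fin ny → Fin (d ^ 2)),
          (Rᴴ * R).trace = 1 ∧
          (∑ a, dop (A a)) = 1 ∧ (∑ b, dop (B b)) = 1 ∧
          (∀ a, A a ≠ 0) ∧ (∀ b, B b ≠ 0) ∧
          (∀ a a', (∃ α : ℂ, A a = α • A a') → a = a') ∧
          (∀ b b', (∃ α : ℂ, B b = α • B b') → b = b') ∧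
          ∀ a b, ∃ α : ℂ, A a * R.map star * B b = α • M (f a b)) ↔
      (∀ i j k, ∃ (l : Fin (d ^ 2)) (α : ℂ), M i * (M j)⁻¹ * M k = α • M l) := by
  constructor
  · rintro ⟨nx, ny, A, B, R, f, hR, hA, hB, hA0, hB0, -, -, hf⟩
    intro i j k
    by_cases hj : IsUnit (M j).det
    swap
    · exact ⟨i, 0, by
        rw [Matrix.nonsing_inv_apply_not_isUnit _ hj, Matrix.mul_zero, Matrix.zero_mul,
          zero_smul]⟩
    set T := R.map star with hTdef
    have hT0 : T ≠ 0 := by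
      intro h0
      have hR0 : R = 0 := by
        ext p q
        have h1 := congrFun (congrFun h0 p) q
        simp only [hTdef, Matrix.map_apply, Matrix.zero_apply] at h1
        simpa using congrArg star h1
      rw [hR0] at hR
      simp at hR
    have hit : ∀ (l : Fin (d^2)) (a : Fin nx) (b : Fin ny),
        ((M l)ᴴ * (A a * T * B b)).trace ≠ 0 →
        ∃ c : ℂ, c ≠ 0 ∧ A a * T * B b = c • M l := by
      intro l a b htr
      obtain ⟨β, hβ⟩ := hf a b
      rw [hβ, Matrix.mul_smul, Matrix.trace_smul, horthM l (f a b), smul_eq_mul] at htr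
      have hl : l = f a b := by
        by_contra hne
        simp [hne] at htr
      rw [if_pos hl, mul_one] at htr
      exact ⟨β, htr, by rw [hβ, hl]⟩
    -- Step 3: surjectivity onto j
    obtain ⟨a', b, hab⟩ : ∃ a b, ((M j)ᴴ * (A a * T * B b)).trace ≠ 0 := by
      by_contra hcon
      push_neg at hcon
      have step1 : ∀ (a : Fin nx) (D : Matrix (Fin d) (Fin d) ℂ),
          (((M j)ᴴ * (A a * T)) * D).trace = 0 := by
        intro a D
        refine vanish B hB _ (fun b => ?_) D
        rw [Matrix.mul_assoc]
        exact hcon a b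
      have step2 : ∀ C D : Matrix (Fin d) (Fin d) ℂ,
          ((M j)ᴴ * (C * T * D)).trace = 0 := by
        intro C D
        rw [cyc4]
        refine vanish A hA _ (fun a => ?_) C
        rw [← cyc4, ← Matrix.mul_assoc]
        exact step1 a D
      obtain ⟨s, t, hst⟩ : ∃ s t, T s t ≠ 0 := by
        by_contra hTc
        push_neg at hTc
        exact hT0 (by ext s t; simpa using hTc s t)
      have hMj0 : M j = 0 := by
        ext p q
        have h2 := step2 (Matrix.single p s 1) (Matrix.single t q 1)
        rw [trace_conj_single] at h2
        rcases mul_eq_zero.mp h2 with h3 | h3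
        · simpa using h3
        · exact absurd h3 hst
      have := horthM j j
      rw [hMj0] at this
      simp at this
    obtain ⟨c, hc, h1⟩ := hit j a' b hab
    -- units
    have hdetprod : IsUnit ((A a' * T * B b).det) := by
      rw [h1, Matrix.det_smul]
      exact ((isUnit_iff_ne_zero.mpr hc).pow (Fintype.card (Fin d))).mul hj
    rw [Matrix.det_mul, Matrix.det_mul] at hdetprod
    obtain ⟨hu1, uB⟩ := IsUnit.mul_iff.mp hdetprod
    obtain ⟨uA', uT⟩ := IsUnit.mul_iff.mp hu1
    -- Step 5: hit i with fixed b
    obtain ⟨a, hia⟩ : ∃ a, ((M i)ᴴ * (A a * T * B b)).trace ≠ 0 := by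
      by_contra hcon
      push_neg at hcon
      have hy : ∀ C, ((T * B b * (M i)ᴴ) * C).trace = 0 := by
        refine vanish A hA _ (fun a => ?_)
        rw [← cyc4]
        exact hcon a
      have h2 := hy (M i * (B b)⁻¹ * T⁻¹)
      rw [Matrix.trace_mul_comm] at h2
      have h3 : (M i * (B b)⁻¹ * T⁻¹) * (T * B b * (M i)ᴴ) = M i * (M i)ᴴ := by
        calc (M i * (B b)⁻¹ * T⁻¹) * (T * B b * (M i)ᴴ)
            = M i * ((B b)⁻¹ * (T⁻¹ * (T * (B b * (M i)ᴴ)))) := by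
              simp only [Matrix.mul_assoc]
          _ = M i * ((B b)⁻¹ * (B b * (M i)ᴴ)) := by
              rw [← Matrix.mul_assoc T⁻¹ T, Matrix.nonsing_inv_mul _ uT, Matrix.one_mul]
          _ = M i * (M i)ᴴ := by
              rw [← Matrix.mul_assoc ((B b)⁻¹) (B b), Matrix.nonsing_inv_mul _ uB,
                Matrix.one_mul]
      rw [h3, Matrix.trace_mul_comm] at h2
      have := horthM i i
      rw [h2] at this
      simp at this
    obtain ⟨α, hα, h2⟩ := hit i a b hia
    -- Step 5': hit k with fixed a'
    obtain ⟨b', hkb⟩ : ∃ b', ((M k)ᴴ * (A a' * T * B b')).trace ≠ 0 := by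
      by_contra hcon
      push_neg at hcon
      have hy : ∀ D, (((M k)ᴴ * A a' * T) * D).trace = 0 := by
        refine vanish B hB _ (fun b'' => ?_)
        have := hcon b''
        simp only [Matrix.mul_assoc] at this ⊢
        exact this
      have h3 := hy (T⁻¹ * ((A a')⁻¹ * M k))
      have h4 : ((M k)ᴴ * A a' * T) * (T⁻¹ * ((A a')⁻¹ * M k)) = (M k)ᴴ * M k := by
        calc ((M k)ᴴ * A a' * T) * (T⁻¹ * ((A a')⁻¹ * M k))
            = (M k)ᴴ * (A a' * (T * (T⁻¹ * ((A a')⁻¹ * M k)))) := by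
              simp only [Matrix.mul_assoc]
          _ = (M k)ᴴ * (A a' * ((A a')⁻¹ * M k)) := by
              rw [← Matrix.mul_assoc T T⁻¹, Matrix.mul_nonsing_inv _ uT, Matrix.one_mul]
          _ = (M k)ᴴ * M k := by
              rw [← Matrix.mul_assoc (A a') ((A a')⁻¹), Matrix.mul_nonsing_inv _ uA',
                Matrix.one_mul]
      rw [h4] at h3
      have := horthM k k
      rw [h3] at this
      simp at this
    obtain ⟨γ, hγ, h3⟩ := hit k a' b' hkb
    obtain ⟨β, h4⟩ := hf a b'
    refine ⟨f a b', α⁻¹ * c * γ⁻¹ * β, ?_⟩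
    have hMi : M i = α⁻¹ • (A a * T * B b) := by
      rw [h2, smul_smul, inv_mul_cancel₀ hα, one_smul]
    have hMk : M k = γ⁻¹ • (A a' * T * B b') := by
      rw [h3, smul_smul, inv_mul_cancel₀ hγ, one_smul]
    have hMjinv : (M j)⁻¹ = c • ((B b)⁻¹ * (T⁻¹ * (A a')⁻¹)) := by
      apply Matrix.inv_eq_right_inv
      have hMj : M j = c⁻¹ • (A a' * T * B b) := by
        rw [h1, smul_smul, inv_mul_cancel₀ hc, one_smul]
      rw [hMj, Matrix.smul_mul, Matrix.mul_smul, smul_smul, inv_mul_cancel₀ hc, one_smul]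
      calc (A a' * T * B b) * ((B b)⁻¹ * (T⁻¹ * (A a')⁻¹))
          = A a' * (T * (B b * ((B b)⁻¹ * (T⁻¹ * (A a')⁻¹)))) := by
            simp only [Matrix.mul_assoc]
        _ = A a' * (T * (T⁻¹ * (A a')⁻¹)) := by
            rw [← Matrix.mul_assoc (B b) ((B b)⁻¹), Matrix.mul_nonsing_inv _ uB,
              Matrix.one_mul]
        _ = A a' * (A a')⁻¹ := by
            rw [← Matrix.mul_assoc T T⁻¹, Matrix.mul_nonsing_inv _ uT, Matrix.one_mul]
        _ = 1 := Matrix.mul_nonsing_inv _ uA'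
    have hprod : (A a * T * B b) * ((B b)⁻¹ * (T⁻¹ * (A a')⁻¹)) * (A a' * T * B b')
        = β • M (f a b') := by
      calc (A a * T * B b) * ((B b)⁻¹ * (T⁻¹ * (A a')⁻¹)) * (A a' * T * B b')
          = A a * (T * (B b * ((B b)⁻¹ * (T⁻¹ * ((A a')⁻¹ * (A a' * (T * B b'))))))) := by
            simp only [Matrix.mul_assoc]
        _ = A a * (T * (B b * ((B b)⁻¹ * (T⁻¹ * (T * B b'))))) := by
            rw [← Matrix.mul_assoc ((A a')⁻¹) (A a'), Matrix.nonsing_inv_mul _ uA',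
              Matrix.one_mul]
        _ = A a * (T * (B b * ((B b)⁻¹ * B b'))) := by
            rw [← Matrix.mul_assoc T⁻¹ T, Matrix.nonsing_inv_mul _ uT, Matrix.one_mul]
        _ = A a * (T * B b') := by
            rw [← Matrix.mul_assoc (B b) ((B b)⁻¹), Matrix.mul_nonsing_inv _ uB,
              Matrix.one_mul]
        _ = β • M (f a b') := by rw [← Matrix.mul_assoc]; exact h4
    rw [hMi, hMk, hMjinv]
    rw [Matrix.smul_mul, Matrix.mul_smul, Matrix.mul_smul, Matrix.smul_mul, Matrix.smul_mul,
      smul_smul, smul_smul, hprod, smul_smul]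
    congr 1
    ring
  · intro hclose
    set z : Fin (d^2) := ⟨0, by positivity⟩ with hz
    have hMz : IsUnit (M z) := hM1
    have hdz : IsUnit (M z).det := (Matrix.isUnit_iff_isUnit_det _).mp hMz
    set K := (M z)⁻¹ with hKdef
    have hK0 : K ≠ 0 := by
      intro h0
      have h1 := Matrix.nonsing_inv_mul (M z) hdz
      rw [← hKdef, h0, Matrix.zero_mul] at h1
      have h2 := congrFun (congrFun h1 ⟨0, hd⟩) ⟨0, hd⟩
      rw [Matrix.zero_apply, Matrix.one_apply_eq] at h2
      exact zero_ne_one h2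
    obtain ⟨p₀, q₀, hpq⟩ : ∃ p q, K p q ≠ 0 := by
      by_contra hcon
      push_neg at hcon
      exact hK0 (by ext p q; simpa using hcon p q)
    set s : ℝ := ∑ p, ∑ q, Complex.normSq (K p q) with hs
    have hspos : 0 < s := by
      refine Finset.sum_pos' (fun x _ => Finset.sum_nonneg fun y _ => Complex.normSq_nonneg _)
        ⟨p₀, Finset.mem_univ p₀, Finset.sum_pos' (fun y _ => Complex.normSq_nonneg _)
          ⟨q₀, Finset.mem_univ q₀, Complex.normSq_pos.mpr hpq⟩⟩
    set c : ℝ := (Real.sqrt s)⁻¹ with hcdef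
    have hcs : c * c * s = 1 := by
      rw [hcdef, ← mul_inv, Real.mul_self_sqrt hspos.le]
      exact inv_mul_cancel₀ hspos.ne'
    have hMne : ∀ a : Fin (d^2), M a ≠ 0 := by
      intro a h0
      have := horthM a a
      rw [h0] at this
      simp at this
    have hnonred : ∀ a a' : Fin (d^2), (∃ α : ℂ, M a = α • M a') → a = a' := by
      rintro a a' ⟨α, hαa⟩
      have key : ∀ b : Fin (d^2), ((α • M a')ᴴ * M b).trace
          = star α * (if a' = b then (1:ℂ) else 0) := by
        intro b
        rw [Matrix.conjTranspose_smul, Matrix.smul_mul, Matrix.trace_smul, horthM a' b,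
          smul_eq_mul]
      have h2' : ((α • M a')ᴴ * M a').trace = star α := by
        rw [key a', if_pos rfl, mul_one]
      have h2 : star α = if a = a' then (1:ℂ) else 0 := by
        rw [← h2', ← hαa]; exact horthM a a'
      have h1' : ((α • M a')ᴴ * (α • M a')).trace = star α * α := by
        rw [Matrix.mul_smul, Matrix.trace_smul, h2', smul_eq_mul, mul_comm]
      have h1 : star α * α = 1 := by
        rw [← h1', ← hαa]
        have h3 := horthM a a
        rw [if_pos rfl] at h3
        exact h3
      by_contra hne
      rw [if_neg hne] at h2
      rw [h2, zero_mul] at h1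
      exact zero_ne_one h1
    refine ⟨d^2, d^2, M, M, (c:ℂ) • K.map star, fun a b => (hclose a z b).choose,
      ?_, complete M horthM, complete M horthM, hMne, hMne, hnonred, hnonred, ?_⟩
    · have htr : ((K.map star)ᴴ * (K.map star)).trace = (s:ℂ) := by
        rw [hs]
        push_cast
        simp only [Matrix.trace, Matrix.diag, Matrix.mul_apply, Matrix.conjTranspose_apply,
          Matrix.map_apply, star_star]
        rw [Finset.sum_comm]
        refine Finset.sum_congr rfl fun x _ => Finset.sum_congr rfl fun y _ => ?_
        rw [Complex.normSq_eq_conj_mul_self, Complex.star_def]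
        ring
      rw [Matrix.conjTranspose_smul, Matrix.smul_mul, Matrix.mul_smul, smul_smul,
        Matrix.trace_smul, htr, smul_eq_mul]
      rw [Complex.star_def, Complex.conj_ofReal]
      push_cast
      rw [← Complex.ofReal_mul, ← Complex.ofReal_mul, hcs, Complex.ofReal_one]
    · intro a b
      obtain ⟨α, hα⟩ := (hclose a z b).choose_spec
      have hmap : (((c:ℂ) • K.map star).map star) = (c:ℂ) • K := by
        ext p q
        simp only [Matrix.map_apply, Matrix.smul_apply, smul_eq_mul]
        rw [star_mul', star_star, Complex.star_def, Complex.conj_ofReal]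
      refine ⟨(c:ℂ) * α, ?_⟩
      show M a * (((c:ℂ) • K.map star).map star) * M b = ((c:ℂ) * α) • M (hclose a z b).choose
      have h5 : M a * K * M b = α • M (hclose a z b).choose := hα
      rw [hmap, Matrix.mul_smul, Matrix.smul_mul]
      exact (congrArg (fun X => ((c:ℝ):ℂ) • X) h5).trans (smul_smul _ _ _)
end
end

section
/- Every orthonormal basis of ℂ² ⊗ ℂ² consisting entirely of product vectors is, up to swapping the two tensor factors, local-unitary equivalent to a basis of the form {|0⟩|0⟩, |0⟩|1⟩, |1⟩|e₀⟩, |1⟩|e₁⟩} where {|e₀⟩, |e₁⟩} is some orthonormal basis of ℂ². -/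
open Matrix

noncomputable section

/-- Vectors of `ℂ² ⊗ ℂ²` in the product basis. -/
abbrev V2 := Fin 2 × Fin 2 → ℂ

/-- Rank-1 projector `|ψ⟩⟨ψ|` of a bipartite vector. -/
def proj (ψ : V2) : Matrix (Fin 2 × Fin 2) (Fin 2 × Fin 2) ℂ :=
  Matrix.of fun p q => ψ p * star (ψ q)

/-- Action of a local operator `u ⊗ v` on a bipartite vector. -/
def act (u v : Matrix (Fin 2) (Fin 2) ℂ) (ψ : V2) : V2 :=
  fun p => ∑ q : Fin 2 × Fin 2, u p.1 q.1 * v p.2 q.2 * ψ q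

/-- Swap of the two tensor factors. -/
def swapV (ψ : V2) : V2 := fun p => ψ (p.2, p.1)

/-- Computational basis vector `|i⟩` of `ℂ²`. -/
def std (i : Fin 2) : Fin 2 → ℂ := fun j => if j = i then 1 else 0

/-- Product vector `|u⟩ ⊗ |v⟩`. -/
def prodv (u v : Fin 2 → ℂ) : V2 := fun p => u p.1 * v p.2

/-- The family `{|0⟩|0⟩, |0⟩|1⟩, |1⟩|e₀⟩, |1⟩|e₁⟩}`. -/
def targetFam (e : Fin 2 → Fin 2 → ℂ) : Fin 4 → V2 :=
  ![prodv (std 0) (std 0), prodv (std 0) (std 1), prodv (std 1) (e 0), prodv (std 1) (e 1)]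

/-!
Write `φ c = a c ⊗ b c`. Orthogonality of `φ c` and `φ c'` forces `a c ⊥ a c'` or `b c ⊥ b c'`,
and `ℂ²` contains no three pairwise orthogonal nonzero vectors. Pigeonholing the pairs `(0, c)`,
after permuting the basis and possibly swapping the factors we may assume `a 0 ⊥ a 1, a 2`; then
`a 3 ∥ a 0` and `b 3 ⊥ b 0`. The unitaries sending `a 0` and `b 0` to multiples of `|0⟩` bring
`φ 0, φ 3` to `|00⟩, |01⟩` up to phases, and `φ 1, φ 2` to `|1⟩ ⊗ e i` with `e` orthonormal.
-/

open scoped ComplexOrder Kronecker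

section InnerProduct

variable {ι κ n : Type*} [Fintype n]

def Orth (x y : n → ℂ) : Prop := star x ⬝ᵥ y = 0

theorem Orth.symm {x y : n → ℂ} (h : Orth x y) : Orth y x := by
  rw [Orth, star_dotProduct, h, star_zero]

def IsOrthonormal [DecidableEq ι] (f : ι → n → ℂ) : Prop :=
  ∀ i j, star (f i) ⬝ᵥ f j = if i = j then 1 else 0

theorem IsOrthonormal.ne_zero [DecidableEq ι] {f : ι → n → ℂ} (hf : IsOrthonormal f) (i : ι) :
    f i ≠ 0 := by
  intro h
  simpa [h] using hf i i

theorem IsOrthonormal.comp [DecidableEq ι] [DecidableEq κ] {f : ι → n → ℂ} (hf : IsOrthonormal f)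
    {σ : κ → ι} (hσ : σ.Injective) : IsOrthonormal (f ∘ σ) := fun i j => by
  simp only [Function.comp_apply, hf (σ i) (σ j), hσ.eq_iff]

theorem dotProduct_mulVec_mulVec_of_unitary [DecidableEq n] {u : Matrix n n ℂ} (hu : uᴴ * u = 1)
    (x y : n → ℂ) : star (u *ᵥ x) ⬝ᵥ u *ᵥ y = star x ⬝ᵥ y := by
  rw [star_mulVec, ← dotProduct_mulVec, mulVec_mulVec, hu, one_mulVec]

theorem IsOrthonormal.mulVec [DecidableEq ι] [DecidableEq n] {f : ι → n → ℂ}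
    (hf : IsOrthonormal f) {u : Matrix n n ℂ} (hu : uᴴ * u = 1) :
    IsOrthonormal fun i => u *ᵥ f i := fun i j => by
  rw [dotProduct_mulVec_mulVec_of_unitary hu, hf]

theorem exists_smul_dotProduct_eq_one {x : n → ℂ} (hx : x ≠ 0) :
    ∃ s : ℂ, star (s • x) ⬝ᵥ (s • x) = 1 := by
  obtain ⟨hre, him⟩ := Complex.pos_iff.1 (dotProduct_star_self_pos_iff.2 hx)
  set r := (star x ⬝ᵥ x).re
  have hr : star x ⬝ᵥ x = r := Complex.ext rfl (by simp [← him])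
  refine ⟨((√r)⁻¹ : ℝ), ?_⟩
  rw [star_smul, smul_dotProduct, dotProduct_smul, hr, smul_eq_mul, smul_eq_mul, Complex.star_def,
    Complex.conj_ofReal]
  norm_cast
  field_simp
  exact (Real.sq_sqrt hre.le).symm

end InnerProduct

section Qubit

variable {x y z : Fin 2 → ℂ}

def wedge (x y : Fin 2 → ℂ) : ℂ := x 0 * y 1 - x 1 * y 0

def frameMatrix (x : Fin 2 → ℂ) : Matrix (Fin 2) (Fin 2) ℂ :=
  !![star (x 0), star (x 1); -x 1, x 0]

theorem dotProduct_star_self_fin_two (x : Fin 2 → ℂ) :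
    star x ⬝ᵥ x = star (x 0) * x 0 + star (x 1) * x 1 := by
  simp [dotProduct, Fin.sum_univ_two]

theorem wedge_eq_zero_of_orth (hz : z ≠ 0) (hx : Orth z x) (hy : Orth z y) : wedge x y = 0 := by
  have hn : star z ⬝ᵥ z ≠ 0 := dotProduct_star_self_eq_zero.not.2 hz
  simp only [Orth, dotProduct, Fin.sum_univ_two, Pi.star_apply] at hx hy
  refine (mul_eq_zero.1 ?_).resolve_left hn
  rw [dotProduct_star_self_fin_two, wedge]
  linear_combination z 0 * (y 1 * hx - x 1 * hy) + z 1 * (x 0 * hy - y 0 * hx)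

theorem eq_zero_of_orth_of_wedge_eq_zero (hx : x ≠ 0) (h : Orth x y) (hw : wedge x y = 0) :
    y = 0 := by
  have hn : star x ⬝ᵥ x ≠ 0 := dotProduct_star_self_eq_zero.not.2 hx
  simp only [Orth, dotProduct, Fin.sum_univ_two, Pi.star_apply] at h
  rw [wedge] at hw
  refine funext (Fin.forall_fin_two.2 ⟨(mul_eq_zero.1 ?_).resolve_left hn,
    (mul_eq_zero.1 ?_).resolve_left hn⟩)
  · rw [dotProduct_star_self_fin_two]
    linear_combination x 0 * h - star (x 1) * hw
  · rw [dotProduct_star_self_fin_two]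
    linear_combination x 1 * h + star (x 0) * hw

theorem not_orth_of_orth_of_orth (hx : x ≠ 0) (hy : y ≠ 0) (hz : z ≠ 0) (hxy : Orth x y)
    (hxz : Orth x z) : ¬Orth y z := fun hyz =>
  hz (eq_zero_of_orth_of_wedge_eq_zero hy hyz (wedge_eq_zero_of_orth hx hxy hxz))

theorem frameMatrix_mulVec (x y : Fin 2 → ℂ) :
    frameMatrix x *ᵥ y = ![star x ⬝ᵥ y, wedge x y] := by
  ext i
  fin_cases i <;> simp [frameMatrix, wedge, dotProduct, Fin.sum_univ_two]
  ring

theorem frameMatrix_conjTranspose_mul_self (hx : star x ⬝ᵥ x = 1) :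
    (frameMatrix x)ᴴ * frameMatrix x = 1 := by
  simp only [dotProduct_star_self_fin_two, RCLike.star_def] at hx
  rw [mul_eq_one_comm]
  ext i j
  fin_cases i <;> fin_cases j <;> simp [frameMatrix, Matrix.mul_apply, Fin.sum_univ_two]
  · linear_combination hx
  · ring
  · ring
  · linear_combination hx

theorem exists_unitary_frame (hx : x ≠ 0) :
    ∃ u : Matrix (Fin 2) (Fin 2) ℂ, uᴴ * u = 1 ∧
      (∀ y, Orth x y → ∃ t : ℂ, u *ᵥ y = t • std 1) ∧
      (∀ y, wedge x y = 0 → ∃ t : ℂ, u *ᵥ y = t • std 0) := by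
  obtain ⟨s, hs⟩ := exists_smul_dotProduct_eq_one hx
  refine ⟨frameMatrix (s • x), frameMatrix_conjTranspose_mul_self hs,
    fun y hy => ⟨wedge (s • x) y, ?_⟩, fun y hy => ⟨star (s • x) ⬝ᵥ y, ?_⟩⟩
  · rw [frameMatrix_mulVec, star_smul, smul_dotProduct, (hy : star x ⬝ᵥ y = 0), smul_zero]
    ext i
    fin_cases i <;> simp [std]
  · have hsy : wedge (s • x) y = 0 := by
      simp only [wedge, Pi.smul_apply, smul_eq_mul] at hy ⊢
      linear_combination s * hy
    rw [frameMatrix_mulVec, hsy]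
    ext i
    fin_cases i <;> simp [std]

end Qubit

theorem dotProduct_prodv (x y x' y' : Fin 2 → ℂ) :
    star (prodv x y) ⬝ᵥ prodv x' y' = (star x ⬝ᵥ x') * (star y ⬝ᵥ y') := by
  simp only [dotProduct, prodv, Fintype.sum_prod_type, Finset.sum_mul_sum, Pi.star_apply,
    star_mul']
  exact Finset.sum_congr rfl fun i _ => Finset.sum_congr rfl fun j _ => by ring

theorem orth_or_orth_of_orth_prodv {x y x' y' : Fin 2 → ℂ} (h : Orth (prodv x y) (prodv x' y')) :
    Orth x x' ∨ Orth y y' :=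
  mul_eq_zero.1 ((dotProduct_prodv x y x' y').symm.trans h)

theorem prodv_smul_left (s : ℂ) (x y : Fin 2 → ℂ) : prodv (s • x) y = s • prodv x y := by
  ext p
  simp only [prodv, Pi.smul_apply, smul_eq_mul]
  ring

theorem prodv_smul_right (s : ℂ) (x y : Fin 2 → ℂ) : prodv x (s • y) = s • prodv x y := by
  ext p
  simp only [prodv, Pi.smul_apply, smul_eq_mul]
  ring

theorem act_prodv (u v : Matrix (Fin 2) (Fin 2) ℂ) (x y : Fin 2 → ℂ) :
    act u v (prodv x y) = prodv (u *ᵥ x) (v *ᵥ y) := by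
  ext p
  simp only [act, prodv, mulVec, dotProduct, Fintype.sum_prod_type, Finset.sum_mul_sum]
  exact Finset.sum_congr rfl fun i _ => Finset.sum_congr rfl fun j _ => by ring

theorem act_eq_kronecker_mulVec (u v : Matrix (Fin 2) (Fin 2) ℂ) (ψ : V2) :
    act u v ψ = (u ⊗ₖ v) *ᵥ ψ :=
  rfl

theorem IsOrthonormal.act {ι : Type*} [DecidableEq ι] {φ : ι → V2} (hφ : IsOrthonormal φ)
    {u v : Matrix (Fin 2) (Fin 2) ℂ} (hu : uᴴ * u = 1) (hv : vᴴ * v = 1) :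
    IsOrthonormal fun i => act u v (φ i) := by
  simp only [act_eq_kronecker_mulVec]
  refine hφ.mulVec ?_
  rw [conjTranspose_kronecker, ← mul_kronecker_mul, hu, hv, one_kronecker_one]

theorem dotProduct_swapV (ψ ψ' : V2) : star (swapV ψ) ⬝ᵥ swapV ψ' = star ψ ⬝ᵥ ψ' :=
  Fintype.sum_equiv (Equiv.prodComm _ _) _ _ fun _ => rfl

theorem IsOrthonormal.swapV {ι : Type*} [DecidableEq ι] {φ : ι → V2} (hφ : IsOrthonormal φ) :
    IsOrthonormal fun i => swapV (φ i) := fun i j => by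
  rw [dotProduct_swapV, hφ]

theorem swapV_prodv (x y : Fin 2 → ℂ) : swapV (prodv x y) = prodv y x := by
  ext p
  exact mul_comm _ _

theorem IsOrthonormal.of_prodv {ι : Type*} [DecidableEq ι] {x : Fin 2 → ℂ}
    (hx : star x ⬝ᵥ x = 1) {e : ι → Fin 2 → ℂ} (he : IsOrthonormal fun i => prodv x (e i)) :
    IsOrthonormal e := fun i j => by
  rw [← he i j, dotProduct_prodv, hx, one_mul]

theorem isOrthonormal_std : IsOrthonormal std := by
  intro i j
  fin_cases i <;> fin_cases j <;> simp [std, dotProduct]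

theorem proj_smul {s : ℂ} (hs : star s * s = 1) (ψ : V2) : proj (s • ψ) = proj ψ := by
  ext p q
  simp only [proj, of_apply, Pi.smul_apply, smul_eq_mul, star_mul']
  linear_combination ψ p * star (ψ q) * hs

theorem range_proj_eq_of_eq_smul {ι κ : Type*} {ψ : ι → V2} {χ : κ → V2} {σ : ι → κ}
    (hσ : σ.Surjective) (s : ι → ℂ) (hψ : ∀ i, star (ψ i) ⬝ᵥ ψ i = 1)
    (hχ : ∀ k, star (χ k) ⬝ᵥ χ k = 1) (h : ∀ i, ψ i = s i • χ (σ i)) :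
    Set.range (fun i => proj (ψ i)) = Set.range fun k => proj (χ k) := by
  have hs : ∀ i, star (s i) * s i = 1 := fun i => by
    simpa [h i, star_smul, smul_dotProduct, dotProduct_smul, hχ, mul_comm] using hψ i
  rw [← hσ.range_comp]
  congr 1
  ext i
  rw [h i, proj_smul (hs i), Function.comp_apply]

theorem targetFam_dotProduct_self {e : Fin 2 → Fin 2 → ℂ} (he : IsOrthonormal e) (k : Fin 4) :
    star (targetFam e k) ⬝ᵥ targetFam e k = 1 := by
  fin_cases k <;> simp [targetFam, dotProduct_prodv, isOrthonormal_std _ _, he _ _]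

theorem IsOrthonormal.orth_or_orth_of_prodv {ι : Type*} [DecidableEq ι] {φ : ι → V2}
    (hφ : IsOrthonormal φ) {a b : ι → Fin 2 → ℂ} (hab : ∀ c, φ c = prodv (a c) (b c))
    (c c' : ι) (hcc' : c ≠ c') : Orth (a c) (a c') ∨ Orth (b c) (b c') :=
  orth_or_orth_of_orth_prodv (by rw [Orth, ← hab, ← hab, hφ, if_neg hcc'])

theorem orth_and_wedge_eq_zero_of_orth {a b : Fin 4 → Fin 2 → ℂ} (ha : ∀ c, a c ≠ 0)
    (hb : ∀ c, b c ≠ 0) (hab : ∀ c c', c ≠ c' → Orth (a c) (a c') ∨ Orth (b c) (b c'))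
    (h1 : Orth (a 0) (a 1)) (h2 : Orth (a 0) (a 2)) :
    Orth (b 0) (b 3) ∧ wedge (a 0) (a 3) = 0 := by
  have hb12 : Orth (b 1) (b 2) :=
    (hab 1 2 (by decide)).resolve_left (not_orth_of_orth_of_orth (ha 0) (ha 1) (ha 2) h1 h2)
  have h3 : Orth (a 1) (a 3) ∨ Orth (a 2) (a 3) := by
    by_contra! h
    exact not_orth_of_orth_of_orth (hb 1) (hb 2) (hb 3) hb12
      ((hab 1 3 (by decide)).resolve_left h.1) ((hab 2 3 (by decide)).resolve_left h.2)
  constructor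
  · refine (hab 0 3 (by decide)).resolve_left fun h03 => ?_
    rcases h3 with h13 | h23
    · exact not_orth_of_orth_of_orth (ha 0) (ha 1) (ha 3) h1 h03 h13
    · exact not_orth_of_orth_of_orth (ha 0) (ha 2) (ha 3) h2 h03 h23
  · rcases h3 with h13 | h23
    · exact wedge_eq_zero_of_orth (ha 1) h1.symm h13
    · exact wedge_eq_zero_of_orth (ha 2) h2.symm h23

theorem exists_perm_of_forall_or {R S : Fin 4 → Fin 4 → Prop}
    (h : ∀ c c', c ≠ c' → R c c' ∨ S c c') :
    ∃ σ : Equiv.Perm (Fin 4),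
      (R (σ 0) (σ 1) ∧ R (σ 0) (σ 2)) ∨ (S (σ 0) (σ 1) ∧ S (σ 0) (σ 2)) := by
  rcases h 0 1 (by decide) with h1 | h1 <;> rcases h 0 2 (by decide) with h2 | h2
  · exact ⟨1, .inl ⟨h1, h2⟩⟩
  · rcases h 0 3 (by decide) with h3 | h3
    · exact ⟨Equiv.swap 2 3, .inl ⟨h1, h3⟩⟩
    · exact ⟨Equiv.swap 1 3, .inr ⟨h3, h2⟩⟩
  · rcases h 0 3 (by decide) with h3 | h3
    · exact ⟨Equiv.swap 1 3, .inl ⟨h3, h2⟩⟩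
    · exact ⟨Equiv.swap 2 3, .inr ⟨h1, h3⟩⟩
  · exact ⟨1, .inr ⟨h1, h2⟩⟩

theorem exists_targetFam_of_orth {φ : Fin 4 → V2} {a b : Fin 4 → Fin 2 → ℂ}
    (hφ : IsOrthonormal φ) (hab : ∀ c, φ c = prodv (a c) (b c))
    (h1 : Orth (a 0) (a 1)) (h2 : Orth (a 0) (a 2)) :
    ∃ e, IsOrthonormal e ∧ ∃ u v : Matrix (Fin 2) (Fin 2) ℂ, uᴴ * u = 1 ∧ vᴴ * v = 1 ∧
      (Set.range fun c => proj (act u v (φ c))) = Set.range fun c => proj (targetFam e c) := by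
  have ha : ∀ c, a c ≠ 0 := fun c h => hφ.ne_zero c (by rw [hab, h]; ext; simp [prodv])
  have hb : ∀ c, b c ≠ 0 := fun c h => hφ.ne_zero c (by rw [hab, h]; ext; simp [prodv])
  obtain ⟨hb03, ha03⟩ :=
    orth_and_wedge_eq_zero_of_orth ha hb (hφ.orth_or_orth_of_prodv hab) h1 h2
  obtain ⟨u, hu, hu1, hu0⟩ := exists_unitary_frame (ha 0)
  obtain ⟨v, hv, hv1, hv0⟩ := exists_unitary_frame (hb 0)
  obtain ⟨α0, hα0⟩ := hu0 (a 0) (by simp [wedge, mul_comm])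
  obtain ⟨α3, hα3⟩ := hu0 (a 3) ha03
  obtain ⟨β0, hβ0⟩ := hv0 (b 0) (by simp [wedge, mul_comm])
  obtain ⟨β3, hβ3⟩ := hv1 (b 3) hb03
  obtain ⟨α1, hα1⟩ := hu1 (a 1) h1
  obtain ⟨α2, hα2⟩ := hu1 (a 2) h2
  set e : Fin 2 → Fin 2 → ℂ := ![α1 • v *ᵥ b 1, α2 • v *ᵥ b 2]
  have hψ := hφ.act hu hv
  have hψ_eq : ∀ c, act u v (φ c) =
      ![α0 * β0, 1, 1, α3 * β3] c • targetFam e (![0, 2, 3, 1] c) := by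
    intro c
    fin_cases c <;>
      simp only [hab, act_prodv, hα0, hα1, hα2, hα3, hβ0, hβ3, prodv_smul_left, prodv_smul_right,
        smul_smul, targetFam, e, Fin.zero_eta, Fin.mk_one, Fin.reduceFinMk, cons_val, mul_one,
        mul_comm]
  have he : IsOrthonormal e := by
    refine IsOrthonormal.of_prodv (isOrthonormal_std 1 1) ?_
    convert hψ.comp (σ := ![1, 2]) (by decide) using 1
    ext i : 1
    fin_cases i <;> simp [hψ_eq, targetFam]
  exact ⟨e, he, u, v, hu, hv, range_proj_eq_of_eq_smul (by decide) _
    (fun c => by rw [hψ c c, if_pos rfl]) (targetFam_dotProduct_self he) hψ_eq⟩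

/-- Every orthonormal basis of `ℂ² ⊗ ℂ²` consisting entirely of product vectors is, up to
swapping the two tensor factors, local-unitary equivalent to a basis of the form
`{|0⟩|0⟩, |0⟩|1⟩, |1⟩|e₀⟩, |1⟩|e₁⟩}` for some orthonormal basis `{|e₀⟩, |e₁⟩}` of `ℂ²`. -/
theorem product_basis_classification (φ : Fin 4 → V2)
    (horth : ∀ c c', ∑ p : Fin 2 × Fin 2, star (φ c p) * φ c' p = if c = c' then 1 else 0)
    (hprod : ∀ c, ∃ u v : Fin 2 → ℂ, φ c = prodv u v) :
    ∃ e : Fin 2 → Fin 2 → ℂ,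
      (∀ i j, ∑ p : Fin 2, star (e i p) * e j p = if i = j then 1 else 0) ∧
      ∃ u v : Matrix (Fin 2) (Fin 2) ℂ, uᴴ * u = 1 ∧ vᴴ * v = 1 ∧
        (((Set.range fun c => proj (act u v (φ c))) =
            Set.range fun c => proj (targetFam e c)) ∨
          ((Set.range fun c => proj (act u v (swapV (φ c)))) =
            Set.range fun c => proj (targetFam e c))) := by
  choose a b hab using hprod
  have hφ : IsOrthonormal φ := horth
  obtain ⟨σ, ⟨h1, h2⟩ | ⟨h1, h2⟩⟩ := exists_perm_of_forall_or (R := fun c c' => Orth (a c) (a c'))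
    (S := fun c c' => Orth (b c) (b c')) (hφ.orth_or_orth_of_prodv hab)
  · obtain ⟨e, he, u, v, hu, hv, h⟩ :=
      exists_targetFam_of_orth (hφ.comp σ.injective) (fun c => hab (σ c)) h1 h2
    exact ⟨e, he, u, v, hu, hv, .inl (h ▸ (σ.surjective.range_comp _).symm)⟩
  · obtain ⟨e, he, u, v, hu, hv, h⟩ := exists_targetFam_of_orth (hφ.comp σ.injective).swapV
      (fun c => by rw [Function.comp_apply, hab, swapV_prodv]) h1 h2
    exact ⟨e, he, u, v, hu, hv, .inr (h ▸ (σ.surjective.range_comp _).symm)⟩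
end
end

section
/- Let U be a 2×2 unitary matrix and suppose that for every matrix Â in a spanning family of M₂(ℂ), both Â and UÂU† lie in the set of matrices having one of the four patterns [[α,β],[0,0]], [[α,0],[0,β]], [[0,β],[α,0]], [[0,0],[α,β]] (α, β ∈ ℂ). Then U is of the form diag(ω, ω'), antidiag(ω, ω'), or ω''·(1/√2)·[[ω', -ω*],[ω, ω'*]] with |ω|=|ω'|=|ω''|=1. Consequently the basis {U|0⟩, U|1⟩} of ℂ², as an unordered pair of rank-1 projectors, is either {|0⟩⟨0|, |1⟩⟨1|} or equals {R_z(θ)|+⟩⟨+|R_z(θ)†, R_z(θ)|−⟩⟨−|R_z(θ)†} for some θ. -/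
open Matrix Complex

noncomputable section

/-- The four admissible patterns `[[α,β],[0,0]]`, `[[α,0],[0,β]]`, `[[0,β],[α,0]]`,
`[[0,0],[α,β]]`. -/
def HasPattern (A : Matrix (Fin 2) (Fin 2) ℂ) : Prop :=
  ∃ α β : ℂ, A = !![α, β; 0, 0] ∨ A = !![α, 0; 0, β] ∨
    A = !![0, β; α, 0] ∨ A = !![0, 0; α, β]

def E00 : Matrix (Fin 2) (Fin 2) ℂ := !![1, 0; 0, 0]
def E11 : Matrix (Fin 2) (Fin 2) ℂ := !![0, 0; 0, 1]

/-- Projector onto `|+⟩`. -/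
def Pplus : Matrix (Fin 2) (Fin 2) ℂ := (2 : ℂ)⁻¹ • !![1, 1; 1, 1]
/-- Projector onto `|−⟩`. -/
def Pminus : Matrix (Fin 2) (Fin 2) ℂ := (2 : ℂ)⁻¹ • !![1, -1; -1, 1]
/-- `R_z(θ) = |0⟩⟨0| + e^{iθ}|1⟩⟨1|`. -/
def Rz (θ : ℝ) : Matrix (Fin 2) (Fin 2) ℂ := !![1, 0; 0, Complex.exp (θ * Complex.I)]

/-!
Write `U = [[a, -δ c̄], [c, δ ā]]` with `|a|² + |c|² = 1` and `|δ| = 1`. A matrix has one of the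
four patterns iff neither of its columns has two nonzero entries. Suppose `a ≠ 0`, `c ≠ 0` and
`|a| ≠ |c|`, and let `A` and `UAU†` both have a pattern. If `A = x yᵀ` has a zero row, then
`UAU† = (Ux)(yᵀU†)` with both entries of `Ux` nonzero, so `y = 0`. If `A = diag(α, β)` with `α ≠ β`,
then `UAU† = β + (α - β) U|0⟩⟨0|U†` has nonzero off-diagonal entries, so both of its diagonal
entries vanish, which forces `|a| = |c|`. So `A₀₀ = A₁₁` in every case, and such
matrices cannot span `M₂(ℂ)`. Hence `c = 0`, `a = 0`, or `|a|² = |c|² = 1/2`; in the last case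
`U|0⟩⟨0|U† = ½[[1, e^{-iθ}], [e^{iθ}, 1]]` with `e^{iθ} = 2cā`.
-/

open ComplexConjugate

lemma norm_eq_one_of_mul_conj_eq_one {K : Type*} [RCLike K] {z : K} (h : z * conj z = 1) :
    ‖z‖ = 1 := by
  rw [RCLike.mul_conj] at h
  exact (pow_eq_one_iff_of_nonneg (norm_nonneg z) two_ne_zero).mp (by exact_mod_cast h)

lemma mul_one_sub_mul_of_mul_eq_one {R : Type*} [Ring R] {V W : R} (h : V * W = 1) (P : R) :
    V * (1 - P) * W = 1 - V * P * W := by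
  rw [mul_sub, sub_mul, mul_one, h]

lemma conjTranspose_fin_two {R : Type*} [Star R] (a b c d : R) :
    !![a, b; c, d]ᴴ = !![star a, star c; star b, star d] := by
  ext i j; fin_cases i <;> fin_cases j <;> rfl

lemma one_sub_E00 : 1 - E00 = E11 := by
  ext i j; fin_cases i <;> fin_cases j <;> simp [E00, E11]

lemma one_sub_E11 : 1 - E11 = E00 := by
  rw [← one_sub_E00, sub_sub_cancel]

lemma one_sub_Pplus : 1 - Pplus = Pminus := by
  ext i j; fin_cases i <;> fin_cases j <;> simp [Pplus, Pminus] <;> norm_num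

lemma Rz_mul_conjTranspose (θ : ℝ) : Rz θ * (Rz θ)ᴴ = 1 := by
  have h : exp (θ * I) * conj (exp (θ * I)) = 1 := by
    rw [mul_conj', norm_exp_ofReal_mul_I]; simp
  ext i j; fin_cases i <;> fin_cases j <;> simp [Rz, conjTranspose_fin_two, h]

lemma HasPattern.col_mul_eq_zero {A : Matrix (Fin 2) (Fin 2) ℂ} (h : HasPattern A) (j : Fin 2) :
    A 0 j * A 1 j = 0 := by
  obtain ⟨α, β, rfl | rfl | rfl | rfl⟩ := h <;> fin_cases j <;> simp

lemma HasPattern.vecMulVec_eq_zero {u v : Fin 2 → ℂ} (h : HasPattern (vecMulVec u v))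
    (hu : u 0 * u 1 ≠ 0) : v = 0 := by
  funext j
  have hj := h.col_mul_eq_zero j
  rw [vecMulVec_apply, vecMulVec_apply] at hj
  replace hj : u 0 * u 1 * v j ^ 2 = 0 := by linear_combination hj
  simpa [hu] using hj

lemma eq_zero_of_hasPattern_conj_vecMulVec {U : Matrix (Fin 2) (Fin 2) ℂ} (hU : Uᴴ * U = 1)
    {x y : Fin 2 → ℂ} (hx : (U *ᵥ x) 0 * (U *ᵥ x) 1 ≠ 0)
    (h : HasPattern (U * vecMulVec x y * Uᴴ)) : y = 0 := by
  rw [mul_vecMulVec, vecMulVec_mul] at h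
  calc y = y ᵥ* Uᴴ ᵥ* U := by rw [vecMul_vecMul, hU, vecMul_one]
    _ = 0 := by rw [h.vecMulVec_eq_zero hx, zero_vecMul]

def unitaryOfColumn (a c δ : ℂ) : Matrix (Fin 2) (Fin 2) ℂ :=
  !![a, -(δ * conj c); c, δ * conj a]

lemma exists_eq_unitaryOfColumn {U : Matrix (Fin 2) (Fin 2) ℂ} (hU : Uᴴ * U = 1) :
    ∃ a c δ : ℂ, a * conj a + c * conj c = 1 ∧ δ * conj δ = 1 ∧ U = unitaryOfColumn a c δ := by
  have hdet := (det_of_mem_unitary (mem_unitaryGroup_iff'.mpr hU)).2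
  obtain ⟨a, b, c, d, rfl⟩ : ∃ a b c d, U = !![a, b; c, d] := ⟨_, _, _, _, U.eta_fin_two⟩
  have hU' := mul_eq_one_comm.mp hU
  rw [conjTranspose_fin_two, mul_fin_two, one_fin_two, ← Matrix.ext_iff] at hU hU'
  have c00 := hU 0 0
  have c01 := hU 0 1
  have r01 := hU' 0 1
  have r11 := hU' 1 1
  simp only [of_apply, cons_val', cons_val_zero, cons_val_one, empty_val', cons_val_fin_one,
    star_def] at c00 c01 r01 r11
  refine ⟨a, c, a * d - b * c, by linear_combination c00, by simpa using hdet, ?_⟩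
  ext i j; fin_cases i <;> fin_cases j
  · rfl
  · simp [unitaryOfColumn]
    linear_combination d * r01 - b * r11
  · rfl
  · simp [unitaryOfColumn]
    linear_combination c * c01 - d * c00

section unitaryOfColumn

variable {a c δ : ℂ}

lemma unitaryOfColumn_mul_conjTranspose (hac : a * conj a + c * conj c = 1)
    (hδ : δ * conj δ = 1) : unitaryOfColumn a c δ * (unitaryOfColumn a c δ)ᴴ = 1 := by
  ext i j; fin_cases i <;> fin_cases j <;> simp [unitaryOfColumn, conjTranspose_fin_two]
  · linear_combination hac + c * conj c * hδ
  · linear_combination -a * conj c * hδ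
  · linear_combination -c * conj a * hδ
  · linear_combination hac + a * conj a * hδ

lemma unitaryOfColumn_mul_E00_mul_conjTranspose :
    unitaryOfColumn a c δ * E00 * (unitaryOfColumn a c δ)ᴴ =
      !![a * conj a, a * conj c; c * conj a, c * conj c] := by
  simp [unitaryOfColumn, E00, conjTranspose_fin_two]

lemma unitaryOfColumn_mul_E11_mul_conjTranspose (hac : a * conj a + c * conj c = 1)
    (hδ : δ * conj δ = 1) :
    unitaryOfColumn a c δ * E11 * (unitaryOfColumn a c δ)ᴴ =
      1 - unitaryOfColumn a c δ * E00 * (unitaryOfColumn a c δ)ᴴ := by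
  rw [← one_sub_E00, mul_one_sub_mul_of_mul_eq_one (unitaryOfColumn_mul_conjTranspose hac hδ)]

lemma unitaryOfColumn_mul_diagonal_mul_conjTranspose (hac : a * conj a + c * conj c = 1)
    (hδ : δ * conj δ = 1) (α β : ℂ) :
    unitaryOfColumn a c δ * !![α, 0; 0, β] * (unitaryOfColumn a c δ)ᴴ =
      !![β + (α - β) * (a * conj a), (α - β) * (a * conj c);
        (α - β) * (c * conj a), β + (α - β) * (c * conj c)] := by
  ext i j; fin_cases i <;> fin_cases j <;> simp [unitaryOfColumn, conjTranspose_fin_two]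
  · linear_combination β * hac + β * c * conj c * hδ
  · linear_combination -β * a * conj c * hδ
  · linear_combination -β * c * conj a * hδ
  · linear_combination β * hac + β * a * conj a * hδ

lemma apply_zero_zero_eq_apply_one_one_of_hasPattern_conj (hac : a * conj a + c * conj c = 1)
    (hδ : δ * conj δ = 1) (ha : a ≠ 0) (hc : c ≠ 0) (hbal : a * conj a ≠ c * conj c)
    {A : Matrix (Fin 2) (Fin 2) ℂ} (hA : HasPattern A)
    (hB : HasPattern (unitaryOfColumn a c δ * A * (unitaryOfColumn a c δ)ᴴ)) :
    A 0 0 = A 1 1 := by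
  have hU : (unitaryOfColumn a c δ)ᴴ * unitaryOfColumn a c δ = 1 :=
    mul_eq_one_comm.mp (unitaryOfColumn_mul_conjTranspose hac hδ)
  obtain ⟨α, β, rfl | rfl | rfl | rfl⟩ := hA
  · have hrow : !![α, β; 0, 0] = vecMulVec ![1, 0] ![α, β] := by
      ext i j; fin_cases i <;> fin_cases j <;> simp [vecMulVec_apply]
    rw [hrow] at hB
    have hy := eq_zero_of_hasPattern_conj_vecMulVec hU (by simp [unitaryOfColumn, ha, hc]) hB
    simpa using congrFun hy 0
  · rw [unitaryOfColumn_mul_diagonal_mul_conjTranspose hac hδ] at hB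
    have h0 := hB.col_mul_eq_zero 0
    have h1 := hB.col_mul_eq_zero 1
    show α = β
    by_contra hne
    have hαβ : α - β ≠ 0 := sub_ne_zero.mpr hne
    simp [hαβ, ha, hc] at h0 h1
    exact hbal (mul_left_cancel₀ hαβ (by linear_combination h0 - h1))
  · rfl
  · have hrow : !![0, 0; α, β] = vecMulVec ![0, 1] ![α, β] := by
      ext i j; fin_cases i <;> fin_cases j <;> simp [vecMulVec_apply]
    rw [hrow] at hB
    have hδ0 : δ ≠ 0 := left_ne_zero_of_mul_eq_one hδ
    have hy := eq_zero_of_hasPattern_conj_vecMulVec hU (by simp [unitaryOfColumn, ha, hc, hδ0]) hB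
    simpa using (congrFun hy 1).symm

lemma eq_zero_or_eq_zero_or_mul_conj_eq (hac : a * conj a + c * conj c = 1)
    (hδ : δ * conj δ = 1) {S : Set (Matrix (Fin 2) (Fin 2) ℂ)} (hS : Submodule.span ℂ S = ⊤)
    (hpat : ∀ A ∈ S,
      HasPattern A ∧ HasPattern (unitaryOfColumn a c δ * A * (unitaryOfColumn a c δ)ᴴ)) :
    c = 0 ∨ a = 0 ∨ a * conj a = c * conj c := by
  by_contra! ⟨hc, ha, hbal⟩
  have hdiag : ∀ A ∈ Submodule.span ℂ S, A 0 0 = A 1 1 := by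
    intro A hA
    induction hA using Submodule.span_induction with
    | mem A hA =>
      exact apply_zero_zero_eq_apply_one_one_of_hasPattern_conj hac hδ ha hc hbal
        (hpat A hA).1 (hpat A hA).2
    | zero => rfl
    | add A B _ _ hA hB => simp [hA, hB]
    | smul r A _ hA => simp [hA]
  simpa [E00] using hdiag E00 (hS ▸ Submodule.mem_top)

lemma exists_unitaryOfColumn_eq_smul (hac : a * conj a + c * conj c = 1)
    (hδ : δ * conj δ = 1) (hbal : a * conj a = c * conj c) :
    ∃ ω ω' ω'' : ℂ, ‖ω‖ = 1 ∧ ‖ω'‖ = 1 ∧ ‖ω''‖ = 1 ∧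
      unitaryOfColumn a c δ = (ω'' * (Real.sqrt 2 : ℂ)⁻¹) • !![ω', -(star ω); ω, star ω'] := by
  obtain ⟨w, rfl⟩ := IsAlgClosed.exists_pow_nat_eq δ two_pos
  have hw : ‖w‖ = 1 := by
    have := norm_eq_one_of_mul_conj_eq_one hδ
    rwa [norm_pow, pow_eq_one_iff_of_nonneg (norm_nonneg w) two_ne_zero] at this
  have hwc : w * conj w = 1 := by rw [mul_conj', hw]; simp
  set s : ℂ := (Real.sqrt 2 : ℂ)
  have hs : s * s = 2 := by
    rw [← ofReal_mul, Real.mul_self_sqrt zero_le_two]; norm_num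
  have hsc : conj s = s := conj_ofReal _
  have hs0 : s ≠ 0 := ofReal_ne_zero.mpr (Real.sqrt_ne_zero'.mpr two_pos)
  refine ⟨s * c * conj w, s * a * conj w, w, norm_eq_one_of_mul_conj_eq_one ?_,
    norm_eq_one_of_mul_conj_eq_one ?_, hw, ?_⟩
  · simp [hsc]
    linear_combination (c * conj c * w * conj w) * hs + 2 * c * conj c * hwc + hac - hbal
  · simp [hsc]
    linear_combination (a * conj a * w * conj w) * hs + 2 * a * conj a * hwc + hac + hbal
  · ext i j; fin_cases i <;> fin_cases j <;> simp [unitaryOfColumn, hsc] <;> field_simp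
    · linear_combination -a * hwc
    · linear_combination -c * hwc

lemma exists_Rz_of_mul_conj_eq (hac : a * conj a + c * conj c = 1)
    (hbal : a * conj a = c * conj c) :
    ∃ θ : ℝ, unitaryOfColumn a c δ * E00 * (unitaryOfColumn a c δ)ᴴ =
      Rz θ * Pplus * (Rz θ)ᴴ := by
  have h2 : conj (2 : ℂ) = 2 := map_ofNat _ 2
  have hz : ‖2 * c * conj a‖ = 1 := norm_eq_one_of_mul_conj_eq_one <| by
    simp only [map_mul, h2, conj_conj]
    linear_combination (a * conj a + c * conj c + 1) * hac - (a * conj a - c * conj c) * hbal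
  refine ⟨arg (2 * c * conj a), ?_⟩
  have hexp := norm_mul_exp_arg_mul_I (2 * c * conj a)
  rw [hz, ofReal_one, one_mul] at hexp
  rw [unitaryOfColumn_mul_E00_mul_conjTranspose]
  ext i j; fin_cases i <;> fin_cases j <;> simp [Rz, Pplus, conjTranspose_fin_two, hexp]
  · linear_combination (hac + hbal) / 2
  · ring
  · ring
  · linear_combination -c * conj c * (hac + hbal)

end unitaryOfColumn

/-- If a unitary `U` conjugates every member of a spanning family of `M₂(ℂ)`, each of which
has one of the four patterns, into a matrix again having one of the four patterns, then `U`
is diagonal, antidiagonal, or a phase times `(1/√2)·[[ω',-ω*],[ω,ω'*]]`; consequently the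
unordered pair of projectors `{U|0⟩⟨0|U†, U|1⟩⟨1|U†}` is either `{|0⟩⟨0|, |1⟩⟨1|}` or
`{R_z(θ)|+⟩⟨+|R_z(θ)†, R_z(θ)|−⟩⟨−|R_z(θ)†}` for some `θ`. -/
theorem pattern_preserving_unitary (U : Matrix (Fin 2) (Fin 2) ℂ)
    (hU : Uᴴ * U = 1)
    (S : Set (Matrix (Fin 2) (Fin 2) ℂ))
    (hS : Submodule.span ℂ S = ⊤)
    (hpat : ∀ A ∈ S, HasPattern A ∧ HasPattern (U * A * Uᴴ)) :
    ((∃ ω ω' : ℂ, ‖ω‖ = 1 ∧ ‖ω'‖ = 1 ∧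
        (U = !![ω, 0; 0, ω'] ∨ U = !![0, ω; ω', 0])) ∨
      (∃ ω ω' ω'' : ℂ, ‖ω‖ = 1 ∧ ‖ω'‖ = 1 ∧ ‖ω''‖ = 1 ∧
        U = (ω'' * (Real.sqrt 2 : ℂ)⁻¹) • !![ω', -(star ω); ω, star ω'])) ∧
    (({U * E00 * Uᴴ, U * E11 * Uᴴ} : Set (Matrix (Fin 2) (Fin 2) ℂ)) = {E00, E11} ∨
      ∃ θ : ℝ, ({U * E00 * Uᴴ, U * E11 * Uᴴ} : Set (Matrix (Fin 2) (Fin 2) ℂ)) =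
        {Rz θ * Pplus * (Rz θ)ᴴ, Rz θ * Pminus * (Rz θ)ᴴ}) := by
  obtain ⟨a, c, δ, hac, hδ, rfl⟩ := exists_eq_unitaryOfColumn hU
  rw [unitaryOfColumn_mul_E11_mul_conjTranspose hac hδ]
  have hδ1 := norm_eq_one_of_mul_conj_eq_one hδ
  rcases eq_zero_or_eq_zero_or_mul_conj_eq hac hδ hS hpat with rfl | rfl | hbal
  · have ha : a * conj a = 1 := by simpa using hac
    have hq : unitaryOfColumn a 0 δ * E00 * (unitaryOfColumn a 0 δ)ᴴ = E00 := by
      rw [unitaryOfColumn_mul_E00_mul_conjTranspose]; simp [E00, ha]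
    refine ⟨Or.inl ⟨a, δ * conj a, norm_eq_one_of_mul_conj_eq_one ha, ?_, Or.inl ?_⟩, Or.inl ?_⟩
    · simp [hδ1, norm_eq_one_of_mul_conj_eq_one ha]
    · simp [unitaryOfColumn]
    · rw [hq, one_sub_E00]
  · have hc : c * conj c = 1 := by simpa using hac
    have hq : unitaryOfColumn 0 c δ * E00 * (unitaryOfColumn 0 c δ)ᴴ = E11 := by
      rw [unitaryOfColumn_mul_E00_mul_conjTranspose]; simp [E11, hc]
    refine ⟨Or.inl ⟨-(δ * conj c), c, ?_, norm_eq_one_of_mul_conj_eq_one hc, Or.inr ?_⟩, Or.inl ?_⟩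
    · simp [hδ1, norm_eq_one_of_mul_conj_eq_one hc]
    · simp [unitaryOfColumn]
    · rw [hq, one_sub_E11, Set.pair_comm]
  · obtain ⟨θ, hq⟩ := exists_Rz_of_mul_conj_eq (δ := δ) hac hbal
    refine ⟨Or.inr (exists_unitaryOfColumn_eq_smul hac hδ hbal), Or.inr ⟨θ, ?_⟩⟩
    rw [hq, ← mul_one_sub_mul_of_mul_eq_one (Rz_mul_conjTranspose θ), one_sub_Pplus]
end
end
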